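/- For every common schema S there exist a SHACL schema S₁ and a ShEx schema S₂ each equivalent to S: for every common graph G, G is valid w.r.t. S iff G is valid w.r.t. S₁, and G is valid w.r.t. S iff G is valid w.r.t. S₂. -/

import Mathlib

/-! ### Common graphs -/

/-- Nodes. -/
abbrev GNode := ℕ
/-- Values. -/
abbrev GValue := ℕ
/-- Predicates. -/
abbrev GPred := ℕ
/-- Keys. -/
abbrev GKey := ℕ

/-- Nodes or values (the disjoint union 𝒩 ∪ 𝒱). -/
abbrev NV := GNode ⊕ GValue
/-- Predicates or keys (the disjoint union 𝒫 ∪ 𝒦). -/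
abbrev PK := GPred ⊕ GKey

/-- Triples of a common graph: edges (𝒩×𝒫×𝒩) and properties (𝒩×𝒦×𝒱). -/
inductive Triple : Type
  | edge (u : GNode) (p : GPred) (v : GNode)
  | prop (u : GNode) (k : GKey) (w : GValue)
  deriving DecidableEq

/-- A common graph: a finite set of triples such that for each node `u` and key `k`
there is at most one value `w` with `(u,k,w)` in the graph. -/
structure CommonGraph : Type where
  triples : Finset Triple
  functional : ∀ u k w w', Triple.prop u k w ∈ triples → Triple.prop u k w' ∈ triples → w = w'

/-- `(v, q, u) ∈ G`, viewed as a binary relation on `𝒩 ∪ 𝒱` for each `q ∈ 𝒫 ∪ 𝒦`. -/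
def tripleRel (G : CommonGraph) : PK → NV → NV → Prop
  | Sum.inl p, Sum.inl u, Sum.inl v => Triple.edge u p v ∈ G.triples
  | Sum.inr k, Sum.inl u, Sum.inr w => Triple.prop u k w ∈ G.triples
  | _, _, _ => False

/-- The nodes occurring in a common graph. -/
def nodesSet (G : CommonGraph) : Set GNode :=
  {u | (∃ p v, Triple.edge u p v ∈ G.triples) ∨ (∃ p v, Triple.edge v p u ∈ G.triples) ∨
       (∃ k w, Triple.prop u k w ∈ G.triples)}

/-- The values occurring in a common graph. -/
def valuesSet (G : CommonGraph) : Set GValue :=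
  {w | ∃ u k, Triple.prop u k w ∈ G.triples}

/-- `v ∈ Nodes(G) ∪ Values(G)`. -/
def inGraph (G : CommonGraph) : NV → Prop
  | Sum.inl u => u ∈ nodesSet G
  | Sum.inr w => w ∈ valuesSet G

/-- The content `ρ(u)` of a node: the record `{(k,w) | ρ(u,k) = w}`. -/
def content (G : CommonGraph) (u : GNode) : Set (GKey × GValue) :=
  {kw | Triple.prop u kw.1 kw.2 ∈ G.triples}

/-! ### Records and content types -/

/-- A record: a functional, finite set of key–value pairs
(a finite-domain partial function `𝒦 ⇀ 𝒱`). -/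
def IsRecord (r : Set (GKey × GValue)) : Prop :=
  r.Finite ∧ ∀ k w w', (k, w) ∈ r → (k, w') ∈ r → w = w'

/-- Content types `θ ::= ⊤ | {} | {k:τ} | θ&θ | θ|θ`. -/
inductive CType (VT : Type) : Type
  | top
  | emp
  | single (k : GKey) (τ : VT)
  | band (θ₁ θ₂ : CType VT)
  | bor (θ₁ θ₂ : CType VT)

/-- The semantics `⟦θ⟧` of a content type: a set of records. -/
def ctSem {VT : Type} (semVT : VT → Set GValue) : CType VT → Set (Set (GKey × GValue))
  | .top => {r | IsRecord r}
  | .emp => {(∅ : Set (GKey × GValue))}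
  | .single k τ => {r | ∃ w ∈ semVT τ, r = {(k, w)}}
  | .band θ₁ θ₂ => {r | IsRecord r ∧ ∃ r₁ ∈ ctSem semVT θ₁, ∃ r₂ ∈ ctSem semVT θ₂, r = r₁ ∪ r₂}
  | .bor θ₁ θ₂ => ctSem semVT θ₁ ∪ ctSem semVT θ₂

/-- Closed content types `ν ::= {} | {k:τ} | ν&ν | ν|ν`. -/
inductive CCType (VT : Type) : Type
  | emp
  | single (k : GKey) (τ : VT)
  | band (ν₁ ν₂ : CCType VT)
  | bor (ν₁ ν₂ : CCType VT)

/-- A closed content type is in particular a content type. -/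
def CCType.toCT {VT : Type} : CCType VT → CType VT
  | .emp => .emp
  | .single k τ => .single k τ
  | .band ν₁ ν₂ => .band ν₁.toCT ν₂.toCT
  | .bor ν₁ ν₂ => .bor ν₁.toCT ν₂.toCT

/-- Open content types: `⊤` or `ν & ⊤` with `ν` closed. -/
inductive OpenCT (VT : Type) : Type
  | top
  | opn (ν : CCType VT)

/-- An open content type as a content type. -/
def OpenCT.toCT {VT : Type} : OpenCT VT → CType VT
  | .top => .top
  | .opn ν => .band ν.toCT .top

/-! ### SHACL -/

/-- SHACL path expressions `π ::= id | q | π⁻ | π·π | π∪π | π*`. -/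
inductive SPath : Type
  | id
  | sym (q : PK)
  | inv (π : SPath)
  | comp (π₁ π₂ : SPath)
  | union (π₁ π₂ : SPath)
  | star (π : SPath)

/-- The semantics `⟦π⟧^G ⊆ (𝒩∪𝒱)²` of a SHACL path expression. -/
def spathSem (G : CommonGraph) : SPath → NV → NV → Prop
  | .id => fun a b => a = b
  | .sym q => tripleRel G q
  | .inv π => fun a b => spathSem G π b a
  | .comp π₁ π₂ => fun a b => ∃ c, spathSem G π₁ a c ∧ spathSem G π₂ c b
  | .union π₁ π₂ => fun a b => spathSem G π₁ a b ∨ spathSem G π₂ a b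
  | .star π => Relation.ReflTransGen (spathSem G π)

/-- SHACL shapes. -/
inductive SShape (VT : Type) : Type
  | top
  | testC (c : GValue)
  | testT (τ : VT)
  | closed (Q : Finset PK)
  | eq (π : SPath) (p : GPred)
  | disj (π : SPath) (p : GPred)
  | not (φ : SShape VT)
  | and (φ₁ φ₂ : SShape VT)
  | or (φ₁ φ₂ : SShape VT)
  | geq (n : ℕ) (π : SPath) (φ : SShape VT)
  | leq (n : ℕ) (π : SPath) (φ : SShape VT)

/-- Satisfaction of SHACL shapes: `G, v ⊨ φ`. -/
def shaclSat {VT : Type} (semVT : VT → Set GValue) (G : CommonGraph) : NV → SShape VT → Prop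
  | _, .top => True
  | v, .testC c => v = Sum.inr c
  | v, .testT τ => ∃ w, v = Sum.inr w ∧ w ∈ semVT τ
  | v, .closed Q => ∀ q : PK, q ∉ Q → ∀ u, ¬ tripleRel G q v u
  | v, .eq π p => {u : NV | spathSem G π v u} = {u : NV | tripleRel G (Sum.inl p) v u}
  | v, .disj π p => {u : NV | spathSem G π v u} ∩ {u : NV | tripleRel G (Sum.inl p) v u} = ∅
  | v, .not φ => ¬ shaclSat semVT G v φ
  | v, .and φ₁ φ₂ => shaclSat semVT G v φ₁ ∧ shaclSat semVT G v φ₂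
  | v, .or φ₁ φ₂ => shaclSat semVT G v φ₁ ∨ shaclSat semVT G v φ₂
  | v, .geq n π φ => (n : ℕ∞) ≤ {u : NV | spathSem G π v u ∧ shaclSat semVT G u φ}.encard
  | v, .leq n π φ => {u : NV | spathSem G π v u ∧ shaclSat semVT G u φ}.encard ≤ (n : ℕ∞)

/-- SHACL selectors: `∃^{≥1}q.⊤`, `∃^{≥1}q⁻.⊤`, or `test(c)`. -/
def IsSHACLSelector {VT : Type} (φ : SShape VT) : Prop :=
  (∃ q : PK, φ = SShape.geq 1 (SPath.sym q) SShape.top) ∨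
  (∃ q : PK, φ = SShape.geq 1 (SPath.inv (SPath.sym q)) SShape.top) ∨
  (∃ c : GValue, φ = SShape.testC c)

/-- A SHACL schema: a finite set of selector–shape pairs. -/
structure SHACLSchema (VT : Type) : Type where
  pairs : Finset (SShape VT × SShape VT)
  sel : ∀ pr ∈ pairs, IsSHACLSelector pr.1

/-- Validity of a common graph w.r.t. a SHACL schema. -/
def shaclValid {VT : Type} (semVT : VT → Set GValue) (S : SHACLSchema VT) (G : CommonGraph) : Prop :=
  ∀ v : NV, ∀ pr ∈ S.pairs, shaclSat semVT G v pr.1 → shaclSat semVT G v pr.2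

/-! ### ShEx -/

/-- Possibly marked triples `(v, q, v')` / `(v, q⁻, v')` (with `inv = true` for marked). -/
structure STriple : Type where
  src : NV
  sym : PK
  inv : Bool
  tgt : NV
  deriving DecidableEq

/-- Well-typedness of a possibly marked triple, i.e. membership in `ℰ ∪ ℰ⁻` where
`ℰ = 𝒩×𝒫×𝒩 ∪ 𝒩×𝒦×𝒱` and `ℰ⁻ = 𝒩×𝒫⁻×𝒩 ∪ 𝒱×𝒦⁻×𝒩`. -/
def STriple.wellTyped : STriple → Prop
  | ⟨a, Sum.inl _, false, b⟩ => (∃ u, a = Sum.inl u) ∧ (∃ v, b = Sum.inl v)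
  | ⟨a, Sum.inr _, false, b⟩ => (∃ u, a = Sum.inl u) ∧ (∃ w, b = Sum.inr w)
  | ⟨a, Sum.inl _, true, b⟩ => (∃ u, a = Sum.inl u) ∧ (∃ v, b = Sum.inl v)
  | ⟨a, Sum.inr _, true, b⟩ => (∃ w, a = Sum.inr w) ∧ (∃ v, b = Sum.inl v)

/-- The signed neighbourhood `Neigh±_G(v)`. -/
def neighPM (G : CommonGraph) (v : NV) : Set STriple :=
  {t | (t.inv = false ∧ t.src = v ∧ tripleRel G t.sym v t.tgt) ∨
       (t.inv = true ∧ t.src = v ∧ tripleRel G t.sym t.tgt v)}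

mutual
/-- ShEx shapes. -/
inductive ShExShape (VT : Type) : Type
  | testC (c : GValue)
  | testT (τ : VT)
  /-- the half-open form `⟨e ; (¬R⁻)*⟩` -/
  | neighHalf (e : TExpr VT) (R : Finset PK)
  /-- the open form `⟨e ; (¬R⁻)* ; (¬Q)*⟩` -/
  | neighOpen (e : TExpr VT) (R : Finset PK) (Q : Finset PK)
  | and (φ₁ φ₂ : ShExShape VT)
  | or (φ₁ φ₂ : ShExShape VT)
  | not (φ : ShExShape VT)

/-- ShEx closed triple expressions. -/
inductive TExpr (VT : Type) : Type
  | eps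
  | fwd (q : PK) (φ : ShExShape VT)
  | bwd (q : PK) (φ : ShExShape VT)
  | seq (e₁ e₂ : TExpr VT)
  | alt (e₁ e₂ : TExpr VT)
  | star (e : TExpr VT)
end

/-- `⟦e₁ ; e₂⟧`: disjoint unions. -/
def seqSem (A B : Set (Set STriple)) : Set (Set STriple) :=
  {T | ∃ T₁ ∈ A, ∃ T₂ ∈ B, T₁ ∩ T₂ = ∅ ∧ T = T₁ ∪ T₂}

/-- `⟦e*⟧`: finite unions of pairwise disjoint members (the empty union included). -/
def starSem (A : Set (Set STriple)) : Set (Set STriple) :=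
  {T | ∃ l : List (Set STriple), (∀ X ∈ l, X ∈ A) ∧
        l.Pairwise (fun X Y => X ∩ Y = ∅) ∧ T = l.foldr (· ∪ ·) ∅}

/-- `⟦¬Q⟧` (for `b = false`) resp. `⟦¬Q⁻⟧` (for `b = true`) at focus `v`:
all singletons of (well-typed) unmarked resp. marked triples with symbol outside `Q`. -/
def negSem (v : NV) (Q : Finset PK) (b : Bool) : Set (Set STriple) :=
  {T | ∃ t : STriple, t.wellTyped ∧ t.src = v ∧ t.inv = b ∧ t.sym ∉ Q ∧ T = {t}}

mutual
/-- Satisfaction of ShEx shapes: `G, v ⊨ φ`. -/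
def shexSat {VT : Type} (semVT : VT → Set GValue) (G : CommonGraph) : NV → ShExShape VT → Prop
  | v, .testC c => v = Sum.inr c
  | v, .testT τ => ∃ w, v = Sum.inr w ∧ w ∈ semVT τ
  | v, .neighHalf e R =>
      neighPM G v ∈ seqSem (teSem semVT G v e) (starSem (negSem v R true))
  | v, .neighOpen e R Q =>
      neighPM G v ∈
        seqSem (seqSem (teSem semVT G v e) (starSem (negSem v R true))) (starSem (negSem v Q false))
  | v, .and φ₁ φ₂ => shexSat semVT G v φ₁ ∧ shexSat semVT G v φ₂
  | v, .or φ₁ φ₂ => shexSat semVT G v φ₁ ∨ shexSat semVT G v φ₂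
  | v, .not φ => ¬ shexSat semVT G v φ

/-- The semantics `⟦e⟧_v^G` of closed triple expressions. -/
def teSem {VT : Type} (semVT : VT → Set GValue) (G : CommonGraph) : NV → TExpr VT → Set (Set STriple)
  | _, .eps => {(∅ : Set STriple)}
  | v, .fwd q φ =>
      {T | ∃ t : STriple, t.wellTyped ∧ t.src = v ∧ t.sym = q ∧ t.inv = false ∧
            shexSat semVT G t.tgt φ ∧ T = {t}}
  | v, .bwd q φ =>
      {T | ∃ t : STriple, t.wellTyped ∧ t.src = v ∧ t.sym = q ∧ t.inv = true ∧
            shexSat semVT G t.tgt φ ∧ T = {t}}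
  | v, .seq e₁ e₂ => seqSem (teSem semVT G v e₁) (teSem semVT G v e₂)
  | v, .alt e₁ e₂ => teSem semVT G v e₁ ∪ teSem semVT G v e₂
  | v, .star e => starSem (teSem semVT G v e)
end

/-- The open triple expression `⊤ = ε ; (¬∅⁻)* ; (¬∅)*` as a shape. -/
def shexTop {VT : Type} : ShExShape VT := .neighOpen .eps ∅ ∅

/-- ShEx selectors: `test(c)`, `⟨q.test(c) ; ⊤⟩`, `⟨q.⟨⊤⟩ ; ⊤⟩`, `⟨q⁻.⟨⊤⟩ ; ⊤⟩`. -/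
def IsShExSelector {VT : Type} (φ : ShExShape VT) : Prop :=
  (∃ c, φ = ShExShape.testC c) ∨
  (∃ q c, φ = ShExShape.neighOpen (TExpr.fwd q (ShExShape.testC c)) ∅ ∅) ∨
  (∃ q, φ = ShExShape.neighOpen (TExpr.fwd q shexTop) ∅ ∅) ∨
  (∃ q, φ = ShExShape.neighOpen (TExpr.bwd q shexTop) ∅ ∅)

/-- A ShEx schema: a finite set of selector–shape pairs. -/
structure ShExSchema (VT : Type) : Type where
  pairs : Finset (ShExShape VT × ShExShape VT)
  sel : ∀ pr ∈ pairs, IsShExSelector pr.1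

/-- Validity of a common graph w.r.t. a ShEx schema. -/
def shexValid {VT : Type} (semVT : VT → Set GValue) (S : ShExSchema VT) (G : CommonGraph) : Prop :=
  ∀ v : NV, ∀ pr ∈ S.pairs, shexSat semVT G v pr.1 → shexSat semVT G v pr.2

/-! ### CoGSL filters -/

/-- Filters `π₀ ::= (k:c) | ¬(k:c) | ν&⊤ | ¬(ν&⊤) | π₀·π₀` (with `ν` a closed content type). -/
inductive GFilter (VT : Type) : Type
  | keyIs (k : GKey) (c : GValue)
  | keyIsNot (k : GKey) (c : GValue)
  | openCT (ν : CCType VT)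
  | notOpenCT (ν : CCType VT)
  | comp (f₁ f₂ : GFilter VT)

/-- The semantics `⟦π₀⟧^G` of a filter, as a binary relation on `𝒩 ∪ 𝒱`. -/
def cfilterSem {VT : Type} (semVT : VT → Set GValue) (G : CommonGraph) :
    GFilter VT → NV → NV → Prop
  | .keyIs k c => fun a b =>
      a = b ∧ ∃ u, a = Sum.inl u ∧ u ∈ nodesSet G ∧ Triple.prop u k c ∈ G.triples
  | .keyIsNot k c => fun a b =>
      a = b ∧ ∃ u, a = Sum.inl u ∧ u ∈ nodesSet G ∧ Triple.prop u k c ∉ G.triples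
  | .openCT ν => fun a b =>
      a = b ∧ ∃ u, a = Sum.inl u ∧ u ∈ nodesSet G ∧
        content G u ∈ ctSem semVT (CType.band ν.toCT CType.top)
  | .notOpenCT ν => fun a b =>
      a = b ∧ ∃ u, a = Sum.inl u ∧ u ∈ nodesSet G ∧
        content G u ∉ ctSem semVT (CType.band ν.toCT CType.top)
  | .comp f₁ f₂ => fun a b => ∃ c, cfilterSem semVT G f₁ a c ∧ cfilterSem semVT G f₂ c b

/-! ### CoGSL paths, shapes, schemas -/

/-- The relation of a key step `k`: from a node `u` to the value `ρ(u,k)`. -/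
def keyRel (G : CommonGraph) (k : GKey) : NV → NV → Prop
  | Sum.inl u, Sum.inr w => Triple.prop u k w ∈ G.triples
  | _, _ => False

/-- Star- and `¬P`-free PG-path expressions `π̄ ::= π₀ | p | π̄⁻ | π̄·π̄ | π̄∪π̄`. -/
inductive BPath (VT : Type) : Type
  | filt (f : GFilter VT)
  | pred (p : GPred)
  | inv (π : BPath VT)
  | comp (π₁ π₂ : BPath VT)
  | union (π₁ π₂ : BPath VT)

/-- The semantics of `π̄`. -/
def bpathSem {VT : Type} (semVT : VT → Set GValue) (G : CommonGraph) :
    BPath VT → NV → NV → Prop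
  | .filt f => cfilterSem semVT G f
  | .pred p => tripleRel G (Sum.inl p)
  | .inv π => fun a b => bpathSem semVT G π b a
  | .comp π₁ π₂ => fun a b => ∃ c, bpathSem semVT G π₁ a c ∧ bpathSem semVT G π₂ c b
  | .union π₁ π₂ => fun a b => bpathSem semVT G π₁ a b ∨ bpathSem semVT G π₂ a b

/-- CoGSL paths `π ::= π̄ | π̄·k | k⁻·π̄ | k⁻·π̄·k'` (together with the path `k`,
shorthand for `⊤·k`, needed for the selector `∃k`). -/
inductive CPath (VT : Type) : Type
  | base (π : BPath VT)
  | toKey (π : BPath VT) (k : GKey)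
  | fromKey (k : GKey) (π : BPath VT)
  | between (k : GKey) (π : BPath VT) (k' : GKey)
  | keyOnly (k : GKey)

/-- The semantics of CoGSL paths. -/
def cpathSem {VT : Type} (semVT : VT → Set GValue) (G : CommonGraph) :
    CPath VT → NV → NV → Prop
  | .base π => bpathSem semVT G π
  | .toKey π k => fun a b => ∃ c, bpathSem semVT G π a c ∧ keyRel G k c b
  | .fromKey k π => fun a b => ∃ c, keyRel G k c a ∧ bpathSem semVT G π c b
  | .between k π k' => fun a b => ∃ c c', keyRel G k c a ∧ bpathSem semVT G π c c' ∧ keyRel G k' c' b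
  | .keyOnly k => keyRel G k

/-- Single-step paths `π₁ ::= π₀·p·π₀ | π₀·p⁻·π₀ | π₀·k | k⁻·π₀`. -/
inductive OnePath (VT : Type) : Type
  | fwd (f₁ : GFilter VT) (p : GPred) (f₂ : GFilter VT)
  | bwd (f₁ : GFilter VT) (p : GPred) (f₂ : GFilter VT)
  | toKey (f : GFilter VT) (k : GKey)
  | fromKey (k : GKey) (f : GFilter VT)

/-- The semantics of single-step paths. -/
def onePathSem {VT : Type} (semVT : VT → Set GValue) (G : CommonGraph) :
    OnePath VT → NV → NV → Prop
  | .fwd f₁ p f₂ => fun a b => ∃ c c', cfilterSem semVT G f₁ a c ∧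
      tripleRel G (Sum.inl p) c c' ∧ cfilterSem semVT G f₂ c' b
  | .bwd f₁ p f₂ => fun a b => ∃ c c', cfilterSem semVT G f₁ a c ∧
      tripleRel G (Sum.inl p) c' c ∧ cfilterSem semVT G f₂ c' b
  | .toKey f k => fun a b => ∃ c, cfilterSem semVT G f a c ∧ keyRel G k c b
  | .fromKey k f => fun a b => ∃ c, keyRel G k c a ∧ cfilterSem semVT G f c b

/-- Common shapes `φ ::= ∃π | ∃^{≤n}π₁ | ∃^{≥n}π₁ | (∃ν ∧ ¬∃¬P) | φ∧φ`. -/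
inductive CShape (VT : Type) : Type
  | exist (π : CPath VT)
  | atMost (n : ℕ) (π : OnePath VT)
  | atLeast (n : ℕ) (π : OnePath VT)
  | closedNode (ν : CCType VT) (P : Finset GPred)
  | and (φ₁ φ₂ : CShape VT)

/-- Satisfaction of common shapes: `G, v ⊨ φ`. -/
def cshapeSat {VT : Type} (semVT : VT → Set GValue) (G : CommonGraph) :
    NV → CShape VT → Prop
  | v, .exist π => ∃ v', cpathSem semVT G π v v'
  | v, .atMost n π => {v' : NV | onePathSem semVT G π v v'}.encard ≤ (n : ℕ∞)
  | v, .atLeast n π => (n : ℕ∞) ≤ {v' : NV | onePathSem semVT G π v v'}.encard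
  | v, .closedNode ν P =>
      (∃ u, v = Sum.inl u ∧ content G u ∈ ctSem semVT ν.toCT) ∧
      (∀ u p w, v = Sum.inl u → Triple.edge u p w ∈ G.triples → p ∈ P)
  | v, .and φ₁ φ₂ => cshapeSat semVT G v φ₁ ∧ cshapeSat semVT G v φ₂

/-- `π` or `π·k'`, used in common selectors. -/
def CPath.ext {VT : Type} (π : BPath VT) : Option GKey → CPath VT
  | none => CPath.base π
  | some k' => CPath.toKey π k'

/-- Common selectors: common shapes of one of the forms
`∃k`, `∃p·π`, `∃p⁻·π`, `∃(k:c)·π`, `∃({k:τ}&⊤)·π`, `∃k⁻·π`,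
where `π` is of the form `π̄` or `π̄·k'`. -/
def IsCommonSelector {VT : Type} (φ : CShape VT) : Prop :=
  (∃ k, φ = CShape.exist (CPath.keyOnly k)) ∨
  (∃ (p : GPred) (π : BPath VT) (k? : Option GKey),
      φ = CShape.exist (CPath.ext (BPath.comp (BPath.pred p) π) k?)) ∨
  (∃ (p : GPred) (π : BPath VT) (k? : Option GKey),
      φ = CShape.exist (CPath.ext (BPath.comp (BPath.inv (BPath.pred p)) π) k?)) ∨
  (∃ (k : GKey) (c : GValue) (π : BPath VT) (k? : Option GKey),
      φ = CShape.exist (CPath.ext (BPath.comp (BPath.filt (GFilter.keyIs k c)) π) k?)) ∨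
  (∃ (k : GKey) (τ : VT) (π : BPath VT) (k? : Option GKey),
      φ = CShape.exist (CPath.ext (BPath.comp (BPath.filt (GFilter.openCT (CCType.single k τ))) π) k?)) ∨
  (∃ (k : GKey) (π : BPath VT), φ = CShape.exist (CPath.fromKey k π)) ∨
  (∃ (k : GKey) (π : BPath VT) (k' : GKey), φ = CShape.exist (CPath.between k π k'))

/-- A common schema: a finite set of selector–shape pairs. -/
structure CommonSchema (VT : Type) : Type where
  pairs : Finset (CShape VT × CShape VT)
  sel : ∀ pr ∈ pairs, IsCommonSelector pr.1

/-- Validity of a common graph w.r.t. a common schema. -/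
def commonValid {VT : Type} (semVT : VT → Set GValue) (S : CommonSchema VT) (G : CommonGraph) : Prop :=
  ∀ v : NV, ∀ pr ∈ S.pairs, cshapeSat semVT G v pr.1 → cshapeSat semVT G v pr.2

section Translation

open Classical

variable {VT : Type} {semVT : VT → Set GValue}

/-- `v` is a node occurring in `G`. -/
def NodeG (G : CommonGraph) (v : NV) : Prop := ∃ u, v = Sum.inl u ∧ u ∈ nodesSet G

lemma tripleRel_src_node {G : CommonGraph} {q a b} (h : tripleRel G q a b) : NodeG G a := by
  rcases q with p | k <;> rcases a with u | w <;> rcases b with u' | w' <;> simp [tripleRel] at h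
  · exact ⟨u, rfl, Or.inl ⟨p, u', h⟩⟩
  · exact ⟨u, rfl, Or.inr (Or.inr ⟨k, w', h⟩)⟩

lemma tripleRel_inl_tgt {G : CommonGraph} {p a b} (h : tripleRel G (Sum.inl p) a b) : NodeG G b := by
  rcases a with u | w <;> rcases b with u' | w' <;> simp [tripleRel] at h
  exact ⟨u', rfl, Or.inr (Or.inl ⟨p, u, h⟩)⟩

lemma tripleRel_inr_tgt {G : CommonGraph} {k a b} (h : tripleRel G (Sum.inr k) a b) :
    ∃ w, b = Sum.inr w := by
  rcases a with u | w <;> rcases b with u' | w' <;> simp [tripleRel] at h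
  exact ⟨w', rfl⟩

lemma cfilterSem_eq {G : CommonGraph} {f : GFilter VT} {a b} (h : cfilterSem semVT G f a b) :
    a = b ∧ NodeG G a := by
  induction f generalizing a b with
  | comp f₁ f₂ ih₁ ih₂ =>
    obtain ⟨c, h₁, h₂⟩ := h
    obtain ⟨e₁, n₁⟩ := ih₁ h₁
    obtain ⟨e₂, _⟩ := ih₂ h₂
    exact ⟨e₁.trans e₂, n₁⟩
  | keyIs k c => obtain ⟨e, u, hu, hn, _⟩ := h; exact ⟨e, u, hu, hn⟩
  | keyIsNot k c => obtain ⟨e, u, hu, hn, _⟩ := h; exact ⟨e, u, hu, hn⟩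
  | openCT ν => obtain ⟨e, u, hu, hn, _⟩ := h; exact ⟨e, u, hu, hn⟩
  | notOpenCT ν => obtain ⟨e, u, hu, hn, _⟩ := h; exact ⟨e, u, hu, hn⟩

lemma cfilterSem_comp_diag {G : CommonGraph} {f₁ f₂ : GFilter VT} {v : NV} :
    cfilterSem semVT G (GFilter.comp f₁ f₂) v v ↔
      cfilterSem semVT G f₁ v v ∧ cfilterSem semVT G f₂ v v := by
  constructor
  · rintro ⟨c, h₁, h₂⟩
    have e := (cfilterSem_eq h₁).1
    subst e
    exact ⟨h₁, h₂⟩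
  · rintro ⟨h₁, h₂⟩; exact ⟨v, h₁, h₂⟩

lemma bpathSem_node {G : CommonGraph} {π : BPath VT} {a b} (h : bpathSem semVT G π a b) :
    NodeG G a ∧ NodeG G b := by
  induction π generalizing a b with
  | filt f => obtain ⟨e, hn⟩ := cfilterSem_eq h; exact ⟨hn, e ▸ hn⟩
  | pred p => exact ⟨tripleRel_src_node h, tripleRel_inl_tgt h⟩
  | inv π ih => exact (ih h).symm
  | comp π₁ π₂ ih₁ ih₂ => obtain ⟨c, h₁, h₂⟩ := h; exact ⟨(ih₁ h₁).1, (ih₂ h₂).2⟩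
  | union π₁ π₂ ih₁ ih₂ => rcases h with h | h; exacts [ih₁ h, ih₂ h]

lemma keyRel_eq_tripleRel (G : CommonGraph) (k : GKey) (a b : NV) :
    keyRel G k a b ↔ tripleRel G (Sum.inr k) a b := by
  rcases a with u | w <;> rcases b with u' | w' <;> simp [keyRel, tripleRel]

lemma content_record (G : CommonGraph) (u : GNode) : IsRecord (content G u) := by
  constructor
  · apply Set.Finite.subset (Set.finite_range (fun t : G.triples =>
      match t.1 with | Triple.prop _ k w => (k, w) | Triple.edge _ _ _ => (0, 0)))
    rintro ⟨k, w⟩ h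
    exact ⟨⟨Triple.prop u k w, h⟩, rfl⟩
  · intro k w w' h h'
    exact G.functional u k w w' h h'

lemma IsRecord.mono {r r' : Set (GKey × GValue)} (hsub : r' ⊆ r) (h : IsRecord r) :
    IsRecord r' :=
  ⟨h.1.subset hsub, fun k w w' h1 h2 => h.2 k w w' (hsub h1) (hsub h2)⟩

end Translation
section CT

variable {VT : Type} {semVT : VT → Set GValue}

lemma mem_band_top_iff {θ : CType VT} {r : Set (GKey × GValue)} (hr : IsRecord r) :
    r ∈ ctSem semVT (CType.band θ CType.top) ↔ ∃ r' ∈ ctSem semVT θ, r' ⊆ r := by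
  constructor
  · rintro ⟨_, r₁, h₁, r₂, _, rfl⟩
    exact ⟨r₁, h₁, Set.subset_union_left⟩
  · rintro ⟨r', h', hsub⟩
    exact ⟨hr, r', h', r, hr, (Set.union_eq_self_of_subset_left hsub).symm⟩

/-- "Contains" semantics of a closed content type. -/
def ccContains (semVT : VT → Set GValue) : CCType VT → Set (GKey × GValue) → Prop
  | .emp, _ => True
  | .single k τ, r => ∃ w ∈ semVT τ, (k, w) ∈ r
  | .band ν₁ ν₂, r => ccContains semVT ν₁ r ∧ ccContains semVT ν₂ r
  | .bor ν₁ ν₂, r => ccContains semVT ν₁ r ∨ ccContains semVT ν₂ r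

lemma exists_sub_iff_ccContains (ν : CCType VT) {r : Set (GKey × GValue)} (hr : IsRecord r) :
    (∃ r' ∈ ctSem semVT ν.toCT, r' ⊆ r) ↔ ccContains semVT ν r := by
  induction ν with
  | emp =>
    simp only [CCType.toCT, ccContains, iff_true]
    exact ⟨∅, rfl, Set.empty_subset r⟩
  | single k τ =>
    simp only [CCType.toCT, ccContains, ctSem]
    constructor
    · rintro ⟨r', ⟨w, hw, rfl⟩, hsub⟩
      exact ⟨w, hw, hsub rfl⟩
    · rintro ⟨w, hw, hmem⟩
      exact ⟨{(k, w)}, ⟨w, hw, rfl⟩, Set.singleton_subset_iff.2 hmem⟩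
  | band ν₁ ν₂ ih₁ ih₂ =>
    simp only [CCType.toCT, ccContains]
    rw [← ih₁, ← ih₂]
    constructor
    · rintro ⟨r', ⟨_, r₁, h₁, r₂, h₂, rfl⟩, hsub⟩
      exact ⟨⟨r₁, h₁, (Set.subset_union_left).trans hsub⟩,
             ⟨r₂, h₂, (Set.subset_union_right).trans hsub⟩⟩
    · rintro ⟨⟨r₁, h₁, hs₁⟩, ⟨r₂, h₂, hs₂⟩⟩
      refine ⟨r₁ ∪ r₂, ⟨hr.mono (Set.union_subset hs₁ hs₂), r₁, h₁, r₂, h₂, rfl⟩,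
        Set.union_subset hs₁ hs₂⟩
  | bor ν₁ ν₂ ih₁ ih₂ =>
    simp only [CCType.toCT, ccContains, ctSem]
    rw [← ih₁, ← ih₂]
    constructor
    · rintro ⟨r', h | h, hsub⟩
      exacts [Or.inl ⟨r', h, hsub⟩, Or.inr ⟨r', h, hsub⟩]
    · rintro (⟨r', h, hsub⟩ | ⟨r', h, hsub⟩)
      exacts [⟨r', Or.inl h, hsub⟩, ⟨r', Or.inr h, hsub⟩]

lemma mem_openCT_iff (ν : CCType VT) {r : Set (GKey × GValue)} (hr : IsRecord r) :
    r ∈ ctSem semVT (CType.band ν.toCT CType.top) ↔ ccContains semVT ν r :=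
  (mem_band_top_iff hr).trans (exists_sub_iff_ccContains ν hr)

/-- The branches (DNF) of a closed content type. -/
def branches : CCType VT → List (List (GKey × VT))
  | .emp => [[]]
  | .single k τ => [[(k, τ)]]
  | .band ν₁ ν₂ => (branches ν₁).flatMap (fun b₁ => (branches ν₂).map (fun b₂ => b₁ ++ b₂))
  | .bor ν₁ ν₂ => branches ν₁ ++ branches ν₂

/-- Semantics of a branch. -/
def BSem (semVT : VT → Set GValue) (b : List (GKey × VT)) (r : Set (GKey × GValue)) : Prop :=
  (∀ kτ ∈ b, ∃ w ∈ semVT kτ.2, (kτ.1, w) ∈ r) ∧ (∀ p ∈ r, ∃ kτ ∈ b, p.1 = kτ.1)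

lemma mem_ccSem_iff (ν : CCType VT) {r : Set (GKey × GValue)} (hr : IsRecord r) :
    r ∈ ctSem semVT ν.toCT ↔ ∃ b ∈ branches ν, BSem semVT b r := by
  induction ν generalizing r with
  | emp =>
    simp only [CCType.toCT, ctSem, branches, BSem, Set.mem_singleton_iff, List.mem_singleton]
    constructor
    · rintro rfl; exact ⟨[], rfl, by simp, by simp⟩
    · rintro ⟨b, rfl, -, hcov⟩
      ext p; simpa using fun hp => by simpa using hcov p hp
  | single k τ =>
    simp only [CCType.toCT, ctSem, branches, BSem, List.mem_singleton]
    constructor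
    · rintro ⟨w, hw, rfl⟩
      refine ⟨[(k, τ)], rfl, fun kτ hk => ?_, by simp⟩
      rw [List.mem_singleton] at hk; subst hk; exact ⟨w, hw, rfl⟩
    · rintro ⟨b, rfl, hpos, hcov⟩
      obtain ⟨w, hw, hmem⟩ := by simpa using hpos (k, τ) (by simp)
      refine ⟨w, hw, ?_⟩
      ext ⟨k', w'⟩
      simp only [Set.mem_singleton_iff, Prod.mk.injEq]
      constructor
      · intro hp
        have hk : k' = k := by simpa using hcov _ hp
        subst hk
        exact ⟨rfl, hr.2 k' w' w hp hmem⟩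
      · rintro ⟨rfl, rfl⟩; exact hmem
  | band ν₁ ν₂ ih₁ ih₂ =>
    simp only [CCType.toCT, ctSem, branches]
    constructor
    · rintro ⟨-, r₁, h₁, r₂, h₂, rfl⟩
      have hr₁ : IsRecord r₁ := hr.mono Set.subset_union_left
      have hr₂ : IsRecord r₂ := hr.mono Set.subset_union_right
      obtain ⟨b₁, hb₁, hp₁, hc₁⟩ := (ih₁ hr₁).1 h₁
      obtain ⟨b₂, hb₂, hp₂, hc₂⟩ := (ih₂ hr₂).1 h₂
      refine ⟨b₁ ++ b₂, by simp only [List.mem_flatMap, List.mem_map]; exact ⟨b₁, hb₁, b₂, hb₂, rfl⟩, ?_, ?_⟩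
      · intro kτ hk
        rcases List.mem_append.1 hk with h | h
        · obtain ⟨w, hw, hm⟩ := hp₁ kτ h; exact ⟨w, hw, Or.inl hm⟩
        · obtain ⟨w, hw, hm⟩ := hp₂ kτ h; exact ⟨w, hw, Or.inr hm⟩
      · rintro p (hp | hp)
        · obtain ⟨kτ, hk, he⟩ := hc₁ p hp; exact ⟨kτ, List.mem_append.2 (Or.inl hk), he⟩
        · obtain ⟨kτ, hk, he⟩ := hc₂ p hp; exact ⟨kτ, List.mem_append.2 (Or.inr hk), he⟩
    · rintro ⟨b, hb, hpos, hcov⟩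
      simp only [List.mem_flatMap, List.mem_map] at hb
      obtain ⟨b₁, hb₁, b₂, hb₂, rfl⟩ := hb
      set r₁ : Set (GKey × GValue) := {p ∈ r | ∃ kτ ∈ b₁, p.1 = kτ.1} with hr₁def
      set r₂ : Set (GKey × GValue) := {p ∈ r | ∃ kτ ∈ b₂, p.1 = kτ.1} with hr₂def
      have hs₁ : r₁ ⊆ r := fun p hp => hp.1
      have hs₂ : r₂ ⊆ r := fun p hp => hp.1
      have m₁ : r₁ ∈ ctSem semVT ν₁.toCT := by
        refine (ih₁ (hr.mono hs₁)).2 ⟨b₁, hb₁, ?_, ?_⟩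
        · intro kτ hk
          obtain ⟨w, hw, hm⟩ := hpos kτ (List.mem_append.2 (Or.inl hk))
          exact ⟨w, hw, hm, kτ, hk, rfl⟩
        · exact fun p hp => hp.2
      have m₂ : r₂ ∈ ctSem semVT ν₂.toCT := by
        refine (ih₂ (hr.mono hs₂)).2 ⟨b₂, hb₂, ?_, ?_⟩
        · intro kτ hk
          obtain ⟨w, hw, hm⟩ := hpos kτ (List.mem_append.2 (Or.inr hk))
          exact ⟨w, hw, hm, kτ, hk, rfl⟩
        · exact fun p hp => hp.2
      refine ⟨hr, r₁, m₁, r₂, m₂, ?_⟩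
      apply Set.Subset.antisymm
      · intro p hp
        obtain ⟨kτ, hk, he⟩ := hcov p hp
        rcases List.mem_append.1 hk with h | h
        · exact Or.inl ⟨hp, kτ, h, he⟩
        · exact Or.inr ⟨hp, kτ, h, he⟩
      · exact Set.union_subset hs₁ hs₂
  | bor ν₁ ν₂ ih₁ ih₂ =>
    simp only [CCType.toCT, ctSem, branches, Set.mem_union]
    rw [ih₁ hr, ih₂ hr]
    constructor
    · rintro (⟨b, hb, h⟩ | ⟨b, hb, h⟩)
      exacts [⟨b, List.mem_append.2 (Or.inl hb), h⟩, ⟨b, List.mem_append.2 (Or.inr hb), h⟩]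
    · rintro ⟨b, hb, h⟩
      rcases List.mem_append.1 hb with h' | h'
      exacts [Or.inl ⟨b, h', h⟩, Or.inr ⟨b, h', h⟩]

/-- All keys appearing in a closed content type. -/
def keyFinset : CCType VT → Finset GKey
  | .emp => ∅
  | .single k _ => {k}
  | .band ν₁ ν₂ => keyFinset ν₁ ∪ keyFinset ν₂
  | .bor ν₁ ν₂ => keyFinset ν₁ ∪ keyFinset ν₂

lemma branch_key_mem {ν : CCType VT} {b : List (GKey × VT)} (hb : b ∈ branches ν)
    {kτ : GKey × VT} (hk : kτ ∈ b) : kτ.1 ∈ keyFinset ν := by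
  induction ν generalizing b with
  | emp => simp [branches] at hb; subst hb; simp at hk
  | single k τ =>
    simp [branches] at hb; subst hb
    simp at hk; subst hk; simp [keyFinset]
  | band ν₁ ν₂ ih₁ ih₂ =>
    simp only [branches, List.mem_flatMap, List.mem_map] at hb
    obtain ⟨b₁, hb₁, b₂, hb₂, rfl⟩ := hb
    rcases List.mem_append.1 hk with h | h
    · exact Finset.mem_union.2 (Or.inl (ih₁ hb₁ h))
    · exact Finset.mem_union.2 (Or.inr (ih₂ hb₂ h))
  | bor ν₁ ν₂ ih₁ ih₂ =>
    rcases List.mem_append.1 hb with h | h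
    · exact Finset.mem_union.2 (Or.inl (ih₁ h hk))
    · exact Finset.mem_union.2 (Or.inr (ih₂ h hk))

end CT
section GLogicSec

variable {VT : Type}

/-- Abstract target logic (instantiated by SHACL and ShEx). -/
structure GLogic (VT : Type) (semVT : VT → Set GValue) where
  A : Type
  sat : CommonGraph → NV → A → Prop
  top : A
  sat_top : ∀ G v, sat G v top
  andl : A → A → A
  sat_and : ∀ G v a b, sat G v (andl a b) ↔ sat G v a ∧ sat G v b
  orl : A → A → A
  sat_or : ∀ G v a b, sat G v (orl a b) ↔ sat G v a ∨ sat G v b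
  notl : A → A
  sat_not : ∀ G v a, sat G v (notl a) ↔ ¬ sat G v a
  testC : GValue → A
  sat_testC : ∀ G v c, sat G v (testC c) ↔ v = Sum.inr c
  testT : VT → A
  sat_testT : ∀ G v τ, sat G v (testT τ) ↔ ∃ w, v = Sum.inr w ∧ w ∈ semVT τ
  geq : ℕ → PK → Bool → A → A
  sat_geq : ∀ G v n q dir a, sat G v (geq n q dir a) ↔
    (n : ℕ∞) ≤ {u : NV | (if dir then tripleRel G q u v else tripleRel G q v u) ∧ sat G u a}.encard
  closedM : Finset GPred → Finset GKey → A
  sat_closedM : ∀ G v P K, sat G v (closedM P K) ↔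
    ((∀ p ∉ P, ∀ u, ¬ tripleRel G (Sum.inl p) v u) ∧
     (∀ k ∉ K, ∀ u, ¬ tripleRel G (Sum.inr k) v u))

variable {semVT : VT → Set GValue} (L : GLogic VT semVT)

/-- Falsum. -/
def GLogic.bot : L.A := L.notl L.top

lemma GLogic.sat_bot (G : CommonGraph) (v : NV) : ¬ L.sat G v L.bot := by
  rw [GLogic.bot, L.sat_not]
  exact not_not_intro (L.sat_top G v)

/-- at most n. -/
def GLogic.leq (n : ℕ) (q : PK) (dir : Bool) (a : L.A) : L.A := L.notl (L.geq (n+1) q dir a)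

lemma GLogic.sat_leq (G : CommonGraph) (v : NV) (n : ℕ) (q : PK) (dir : Bool) (a : L.A) :
    L.sat G v (L.leq n q dir a) ↔
      {u : NV | (if dir then tripleRel G q u v else tripleRel G q v u) ∧ sat L G u a}.encard
        ≤ (n : ℕ∞) := by
  rw [GLogic.leq, L.sat_not, L.sat_geq, not_le]
  push_cast
  exact ENat.lt_add_one_iff (by simp)

/-- exists at least one. -/
lemma GLogic.sat_geq_one (G : CommonGraph) (v : NV) (q : PK) (dir : Bool) (a : L.A) :
    L.sat G v (L.geq 1 q dir a) ↔
      ∃ u, (if dir then tripleRel G q u v else tripleRel G q v u) ∧ L.sat G u a := by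
  rw [L.sat_geq]
  exact_mod_cast (Set.one_le_encard_iff_nonempty).trans Iff.rfl

/-- Finite conjunction. -/
def GLogic.andList (l : List L.A) : L.A := l.foldr L.andl L.top

lemma GLogic.sat_andList (G : CommonGraph) (v : NV) (l : List L.A) :
    L.sat G v (L.andList l) ↔ ∀ a ∈ l, L.sat G v a := by
  induction l with
  | nil => simpa [GLogic.andList] using L.sat_top G v
  | cons a l ih =>
    rw [GLogic.andList, List.foldr_cons, L.sat_and]
    rw [GLogic.andList] at ih
    simp [ih]

/-- Finite disjunction. -/
def GLogic.orList (l : List L.A) : L.A := l.foldr L.orl L.bot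

lemma GLogic.sat_orList (G : CommonGraph) (v : NV) (l : List L.A) :
    L.sat G v (L.orList l) ↔ ∃ a ∈ l, L.sat G v a := by
  induction l with
  | nil => simpa [GLogic.orList] using L.sat_bot G v
  | cons a l ih =>
    rw [GLogic.orList, List.foldr_cons, L.sat_or]
    rw [GLogic.orList] at ih
    simp [ih]

end GLogicSec
section Generic

open Classical

variable {VT : Type} {semVT : VT → Set GValue} (L : GLogic VT semVT)

lemma sat_keyT_iff (G : CommonGraph) (u : GNode) (k : GKey) (τ : VT) :
    L.sat G (Sum.inl u) (L.geq 1 (Sum.inr k) false (L.testT τ)) ↔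
      ∃ w ∈ semVT τ, Triple.prop u k w ∈ G.triples := by
  rw [L.sat_geq_one]
  constructor
  · rintro ⟨u', h, ht⟩
    rw [L.sat_testT] at ht
    obtain ⟨w, rfl, hw⟩ := ht
    simp only [if_neg Bool.false_ne_true] at h
    exact ⟨w, hw, by simpa [tripleRel] using h⟩
  · rintro ⟨w, hw, hm⟩
    refine ⟨Sum.inr w, by simpa [tripleRel] using hm, ?_⟩
    rw [L.sat_testT]; exact ⟨w, rfl, hw⟩

lemma sat_keyC_iff (G : CommonGraph) (u : GNode) (k : GKey) (c : GValue) :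
    L.sat G (Sum.inl u) (L.geq 1 (Sum.inr k) false (L.testC c)) ↔
      Triple.prop u k c ∈ G.triples := by
  rw [L.sat_geq_one]
  constructor
  · rintro ⟨u', h, ht⟩
    rw [L.sat_testC] at ht
    subst ht
    simpa [tripleRel] using h
  · intro hm
    refine ⟨Sum.inr c, by simpa [tripleRel] using hm, ?_⟩
    rw [L.sat_testC]

lemma sat_key_iff (G : CommonGraph) (u : GNode) (k : GKey) :
    L.sat G (Sum.inl u) (L.geq 1 (Sum.inr k) false L.top) ↔
      ∃ w, Triple.prop u k w ∈ G.triples := by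
  rw [L.sat_geq_one]
  constructor
  · rintro ⟨u', h, -⟩
    simp only [if_neg Bool.false_ne_true] at h
    obtain ⟨w, rfl⟩ := tripleRel_inr_tgt h
    exact ⟨w, by simpa [tripleRel] using h⟩
  · rintro ⟨w, hm⟩
    exact ⟨Sum.inr w, by simpa [tripleRel] using hm, L.sat_top _ _⟩

/-- Translation of content-type "contains" tests. -/
lemma contains_shape (ν : CCType VT) :
    ∃ χ : L.A, ∀ G u, L.sat G (Sum.inl u) χ ↔ ccContains semVT ν (content G u) := by
  induction ν with
  | emp => exact ⟨L.top, fun G u => by simpa [ccContains] using L.sat_top G (Sum.inl u)⟩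
  | single k τ =>
    refine ⟨L.geq 1 (Sum.inr k) false (L.testT τ), fun G u => ?_⟩
    rw [sat_keyT_iff]
    simp [ccContains, content]
  | band ν₁ ν₂ ih₁ ih₂ =>
    obtain ⟨χ₁, h₁⟩ := ih₁
    obtain ⟨χ₂, h₂⟩ := ih₂
    exact ⟨L.andl χ₁ χ₂, fun G u => by rw [L.sat_and, h₁, h₂]; rfl⟩
  | bor ν₁ ν₂ ih₁ ih₂ =>
    obtain ⟨χ₁, h₁⟩ := ih₁
    obtain ⟨χ₂, h₂⟩ := ih₂
    exact ⟨L.orl χ₁ χ₂, fun G u => by rw [L.sat_or, h₁, h₂]; rfl⟩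

/-- Translation of filters (valid at nodes of the graph). -/
lemma filt_shape (f : GFilter VT) :
    ∃ χ : L.A, ∀ G v, NodeG G v → (L.sat G v χ ↔ cfilterSem semVT G f v v) := by
  induction f with
  | keyIs k c =>
    refine ⟨L.geq 1 (Sum.inr k) false (L.testC c), ?_⟩
    rintro G v ⟨u, rfl, hu⟩
    rw [sat_keyC_iff]
    constructor
    · intro h; exact ⟨rfl, u, rfl, hu, h⟩
    · rintro ⟨-, u', hu', -, h⟩
      obtain rfl : u = u' := by injection hu'
      exact h
  | keyIsNot k c =>
    refine ⟨L.notl (L.geq 1 (Sum.inr k) false (L.testC c)), ?_⟩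
    rintro G v ⟨u, rfl, hu⟩
    rw [L.sat_not, sat_keyC_iff]
    constructor
    · intro h; exact ⟨rfl, u, rfl, hu, h⟩
    · rintro ⟨-, u', hu', -, h⟩
      obtain rfl : u = u' := by injection hu'
      exact h
  | openCT ν =>
    obtain ⟨χ, hχ⟩ := contains_shape L ν
    refine ⟨χ, ?_⟩
    rintro G v ⟨u, rfl, hu⟩
    rw [hχ, ← mem_openCT_iff ν (content_record G u)]
    constructor
    · intro h; exact ⟨rfl, u, rfl, hu, h⟩
    · rintro ⟨-, u', hu', -, h⟩
      obtain rfl : u = u' := by injection hu'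
      exact h
  | notOpenCT ν =>
    obtain ⟨χ, hχ⟩ := contains_shape L ν
    refine ⟨L.notl χ, ?_⟩
    rintro G v ⟨u, rfl, hu⟩
    rw [L.sat_not, hχ, ← mem_openCT_iff ν (content_record G u)]
    constructor
    · intro h; exact ⟨rfl, u, rfl, hu, h⟩
    · rintro ⟨-, u', hu', -, h⟩
      obtain rfl : u = u' := by injection hu'
      exact h
  | comp f₁ f₂ ih₁ ih₂ =>
    obtain ⟨χ₁, h₁⟩ := ih₁
    obtain ⟨χ₂, h₂⟩ := ih₂
    refine ⟨L.andl χ₁ χ₂, fun G v hn => ?_⟩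
    rw [L.sat_and, h₁ G v hn, h₂ G v hn, cfilterSem_comp_diag]

/-- Translation of `closedNode` shapes. -/
lemma closedNode_shape (ν : CCType VT) (P : Finset GPred) :
    ∃ χ : L.A, ∀ G u, L.sat G (Sum.inl u) χ ↔
      cshapeSat semVT G (Sum.inl u) (CShape.closedNode ν P) := by
  classical
  set K₀ := keyFinset ν with hK₀
  refine ⟨L.andl (L.closedM P K₀) (L.orList ((branches ν).map (fun b =>
    L.andl (L.andList (b.map fun kτ => L.geq 1 (Sum.inr kτ.1) false (L.testT kτ.2)))
      (L.andList ((K₀ \ (b.map Prod.fst).toFinset).toList.map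
        fun k => L.notl (L.geq 1 (Sum.inr k) false L.top)))))), fun G u => ?_⟩
  have hr := content_record G u
  have RHSiff : cshapeSat semVT G (Sum.inl u) (CShape.closedNode ν P) ↔
      (content G u ∈ ctSem semVT ν.toCT ∧ ∀ p w, Triple.edge u p w ∈ G.triples → p ∈ P) := by
    simp only [cshapeSat]
    constructor
    · rintro ⟨⟨u', hu', hc⟩, hcl⟩
      obtain rfl : u = u' := by injection hu'
      exact ⟨hc, fun p w h => hcl u p w rfl h⟩
    · rintro ⟨hc, hcl⟩
      refine ⟨⟨u, rfl, hc⟩, fun u' p w hu' h => ?_⟩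
      obtain rfl : u = u' := by injection hu'
      exact hcl p w h
  rw [RHSiff, L.sat_and, L.sat_closedM, L.sat_orList]
  constructor
  · rintro ⟨⟨hP, hK⟩, a, ha, hsat⟩
    simp only [List.mem_map] at ha
    obtain ⟨b, hb, rfl⟩ := ha
    rw [L.sat_and, L.sat_andList, L.sat_andList] at hsat
    obtain ⟨hpos, hneg⟩ := hsat
    have hpos' : ∀ kτ ∈ b, ∃ w ∈ semVT kτ.2, (kτ.1, w) ∈ content G u := by
      intro kτ hk
      have := hpos _ (List.mem_map.2 ⟨kτ, hk, rfl⟩)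
      rw [sat_keyT_iff] at this
      exact this
    have hneg' : ∀ k ∈ K₀, k ∉ (b.map Prod.fst).toFinset → ∀ w, (k, w) ∉ content G u := by
      intro k hk hk' w hw
      have := hneg _ (List.mem_map.2 ⟨k, Finset.mem_toList.2 (Finset.mem_sdiff.2 ⟨hk, hk'⟩), rfl⟩)
      rw [L.sat_not, sat_key_iff] at this
      exact this ⟨w, hw⟩
    constructor
    · refine (mem_ccSem_iff ν hr).2 ⟨b, hb, hpos', ?_⟩
      rintro ⟨k, w⟩ hp
      by_cases hkb : k ∈ (b.map Prod.fst).toFinset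
      · obtain ⟨kτ, hkτ, he⟩ := List.mem_map.1 (List.mem_toFinset.1 hkb)
        exact ⟨kτ, hkτ, he.symm⟩
      · by_cases hk0 : k ∈ K₀
        · exact absurd hp (hneg' k hk0 hkb w)
        · exact absurd (by simpa [tripleRel, content] using hp :
            tripleRel G (Sum.inr k) (Sum.inl u) (Sum.inr w)) (hK k hk0 (Sum.inr w))
    · intro p w h
      by_contra hp
      exact hP p hp (Sum.inl w) (by simpa [tripleRel] using h)
  · rintro ⟨hc, hcl⟩
    obtain ⟨b, hb, hpos, hcov⟩ := (mem_ccSem_iff ν hr).1 hc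
    refine ⟨⟨?_, ?_⟩, ?_⟩
    · intro p hp uu htr
      rcases uu with u' | w' <;> simp [tripleRel] at htr
      exact hp (hcl p u' htr)
    · intro k hk uu htr
      rcases uu with u' | w' <;> simp [tripleRel] at htr
      obtain ⟨kτ, hkτ, he⟩ := hcov (k, w') htr
      have hkK : k ∈ K₀ := by rw [show k = kτ.1 from he]; exact branch_key_mem hb hkτ
      exact hk hkK
    · refine ⟨_, List.mem_map.2 ⟨b, hb, rfl⟩, ?_⟩
      rw [L.sat_and, L.sat_andList, L.sat_andList]
      constructor
      · intro a ha
        obtain ⟨kτ, hkτ, rfl⟩ := List.mem_map.1 ha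
        rw [sat_keyT_iff]
        exact hpos kτ hkτ
      · intro a ha
        obtain ⟨k, hk, rfl⟩ := List.mem_map.1 ha
        rw [Finset.mem_toList, Finset.mem_sdiff] at hk
        rw [L.sat_not, sat_key_iff]
        rintro ⟨w, hw⟩
        obtain ⟨kτ, hkτ, he⟩ := hcov (k, w) hw
        exact hk.2 (List.mem_toFinset.2 (List.mem_map.2 ⟨kτ, hkτ, he.symm⟩))

end Generic
section Paths

open Classical

variable {VT : Type} {semVT : VT → Set GValue} (L : GLogic VT semVT)

/-- Translation of star-free paths (with a continuation), forwards and backwards. -/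
lemma bpath_shape (π : BPath VT) : ∀ ψ : L.A,
    ∃ χf χb : L.A, ∀ G v, NodeG G v →
      (L.sat G v χf ↔ ∃ v', bpathSem semVT G π v v' ∧ L.sat G v' ψ) ∧
      (L.sat G v χb ↔ ∃ v', bpathSem semVT G π v' v ∧ L.sat G v' ψ) := by
  induction π with
  | filt f =>
    intro ψ
    obtain ⟨χ, hχ⟩ := filt_shape L f
    refine ⟨L.andl χ ψ, L.andl χ ψ, fun G v hn => ?_⟩
    rw [L.sat_and, hχ G v hn]
    constructor
    · constructor
      · rintro ⟨h1, h2⟩; exact ⟨v, h1, h2⟩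
      · rintro ⟨v', h1, h2⟩
        obtain ⟨he, -⟩ := cfilterSem_eq (f := f) h1
        subst he
        exact ⟨h1, h2⟩
    · constructor
      · rintro ⟨h1, h2⟩; exact ⟨v, h1, h2⟩
      · rintro ⟨v', h1, h2⟩
        obtain ⟨he, -⟩ := cfilterSem_eq (f := f) h1
        rw [← he]
        rw [← he] at h1
        exact ⟨h1, h2⟩
  | pred p =>
    intro ψ
    refine ⟨L.geq 1 (Sum.inl p) false ψ, L.geq 1 (Sum.inl p) true ψ, fun G v _ => ?_⟩
    rw [L.sat_geq_one, L.sat_geq_one]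
    constructor
    · simp only [if_neg Bool.false_ne_true]; rfl
    · simp only [if_pos rfl]; rfl
  | inv π ih =>
    intro ψ
    obtain ⟨χf, χb, h⟩ := ih ψ
    exact ⟨χb, χf, fun G v hn => ⟨(h G v hn).2, (h G v hn).1⟩⟩
  | comp π₁ π₂ ih₁ ih₂ =>
    intro ψ
    obtain ⟨χ₂f, χ₂b, h₂⟩ := ih₂ ψ
    obtain ⟨χ₁f, χ₁b, h₁⟩ := ih₁ ψ
    obtain ⟨χf, χf2, hf⟩ := ih₁ χ₂f
    obtain ⟨χb2, χb, hb⟩ := ih₂ χ₁b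
    refine ⟨χf, χb, fun G v hn => ⟨?_, ?_⟩⟩
    · rw [(hf G v hn).1]
      constructor
      · rintro ⟨c, hc, hsat⟩
        obtain ⟨v', h', hψ⟩ := ((h₂ G c (bpathSem_node hc).2).1).1 hsat
        exact ⟨v', ⟨c, hc, h'⟩, hψ⟩
      · rintro ⟨v', ⟨c, hc1, hc2⟩, hψ⟩
        exact ⟨c, hc1, ((h₂ G c (bpathSem_node hc1).2).1).2 ⟨v', hc2, hψ⟩⟩
    · rw [(hb G v hn).2]
      constructor
      · rintro ⟨c, hc, hsat⟩
        obtain ⟨v', h', hψ⟩ := ((h₁ G c (bpathSem_node hc).1).2).1 hsat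
        exact ⟨v', ⟨c, h', hc⟩, hψ⟩
      · rintro ⟨v', ⟨c, hc1, hc2⟩, hψ⟩
        exact ⟨c, hc2, ((h₁ G c (bpathSem_node hc2).1).2).2 ⟨v', hc1, hψ⟩⟩
  | union π₁ π₂ ih₁ ih₂ =>
    intro ψ
    obtain ⟨χ₁f, χ₁b, h₁⟩ := ih₁ ψ
    obtain ⟨χ₂f, χ₂b, h₂⟩ := ih₂ ψ
    refine ⟨L.orl χ₁f χ₂f, L.orl χ₁b χ₂b, fun G v hn => ⟨?_, ?_⟩⟩
    · rw [L.sat_or, (h₁ G v hn).1, (h₂ G v hn).1]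
      constructor
      · rintro (⟨v', h, hψ⟩ | ⟨v', h, hψ⟩)
        exacts [⟨v', Or.inl h, hψ⟩, ⟨v', Or.inr h, hψ⟩]
      · rintro ⟨v', h | h, hψ⟩
        exacts [Or.inl ⟨v', h, hψ⟩, Or.inr ⟨v', h, hψ⟩]
    · rw [L.sat_or, (h₁ G v hn).2, (h₂ G v hn).2]
      constructor
      · rintro (⟨v', h, hψ⟩ | ⟨v', h, hψ⟩)
        exacts [⟨v', Or.inl h, hψ⟩, ⟨v', Or.inr h, hψ⟩]
      · rintro ⟨v', h | h, hψ⟩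
        exacts [Or.inl ⟨v', h, hψ⟩, Or.inr ⟨v', h, hψ⟩]

end Paths
section Counting

open Classical

variable {VT : Type} {semVT : VT → Set GValue} (L : GLogic VT semVT)

lemma natCast_le_encard_empty (n : ℕ) : ((n : ℕ∞) ≤ (∅ : Set NV).encard) ↔ n = 0 := by
  rw [Set.encard_empty]
  exact_mod_cast Nat.le_zero

/-- Translation of counting over single-step paths. -/
lemma onePath_shape (op : OnePath VT) (n : ℕ) :
    ∃ χg χl : L.A, ∀ G v,
      (L.sat G v χg ↔ cshapeSat semVT G v (CShape.atLeast n op)) ∧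
      (L.sat G v χl ↔ cshapeSat semVT G v (CShape.atMost n op)) := by
  cases op with
  | fwd f₁ p f₂ =>
    obtain ⟨χ₁, h₁⟩ := filt_shape L f₁
    obtain ⟨χ₂, h₂⟩ := filt_shape L f₂
    refine ⟨if n = 0 then L.top else L.andl χ₁ (L.geq n (Sum.inl p) false χ₂),
      L.orl (L.notl χ₁) (L.leq n (Sum.inl p) false χ₂), fun G v => ?_⟩
    simp only [cshapeSat]
    have hT : {u : NV | (if false then tripleRel G (Sum.inl p) u v
        else tripleRel G (Sum.inl p) v u) ∧ L.sat G u χ₂}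
        = {u : NV | tripleRel G (Sum.inl p) v u ∧ cfilterSem semVT G f₂ u u} := by
      ext u
      simp only [Set.mem_setOf_eq, if_neg Bool.false_ne_true]
      exact and_congr_right fun htr => h₂ G u (tripleRel_inl_tgt htr)
    by_cases hc : cfilterSem semVT G f₁ v v
    · have hn : NodeG G v := (cfilterSem_eq hc).2
      have hS : {v' : NV | onePathSem semVT G (OnePath.fwd f₁ p f₂) v v'}
          = {u : NV | tripleRel G (Sum.inl p) v u ∧ cfilterSem semVT G f₂ u u} := by
        ext v'
        simp only [Set.mem_setOf_eq, onePathSem]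
        constructor
        · rintro ⟨c, c', hf1, htr, hf2⟩
          obtain ⟨rfl, -⟩ := cfilterSem_eq hf1
          obtain ⟨rfl, -⟩ := cfilterSem_eq hf2
          exact ⟨htr, hf2⟩
        · rintro ⟨htr, hf2⟩
          exact ⟨v, v', hc, htr, hf2⟩
      rw [hS]
      constructor
      · rcases Nat.eq_zero_or_pos n with rfl | hpos
        · rw [if_pos rfl]
          simpa using L.sat_top G v
        · rw [if_neg hpos.ne', L.sat_and, L.sat_geq, hT, h₁ G v hn]
          simp [hc]
      · rw [L.sat_or, L.sat_not, L.sat_leq, hT, h₁ G v hn]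
        simp [hc]
    · have hS : {v' : NV | onePathSem semVT G (OnePath.fwd f₁ p f₂) v v'} = ∅ := by
        ext v'
        simp only [Set.mem_setOf_eq, onePathSem, Set.mem_empty_iff_false, iff_false, not_exists]
        rintro c c' ⟨hf1, -, -⟩
        obtain ⟨rfl, -⟩ := cfilterSem_eq hf1
        exact hc hf1
      rw [hS]
      have hsat1 : ¬ L.sat G v χ₁ ∨ {u : NV | tripleRel G (Sum.inl p) v u
          ∧ cfilterSem semVT G f₂ u u} = ∅ := by
        by_cases hn : NodeG G v
        · exact Or.inl fun h => hc ((h₁ G v hn).1 h)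
        · refine Or.inr ?_
          ext u
          simp only [Set.mem_setOf_eq, Set.mem_empty_iff_false, iff_false, not_and]
          exact fun htr _ => hn (tripleRel_src_node htr)
      constructor
      · rcases Nat.eq_zero_or_pos n with rfl | hpos
        · rw [if_pos rfl]
          simpa using L.sat_top G v
        · rw [if_neg hpos.ne', L.sat_and, L.sat_geq, hT, natCast_le_encard_empty]
          constructor
          · rintro ⟨hχ, hle⟩
            rcases hsat1 with h | h
            · exact absurd hχ h
            · exact (natCast_le_encard_empty n).1 (h ▸ hle)
          · intro h0
            exact absurd h0 hpos.ne'
      · rw [L.sat_or, L.sat_not, L.sat_leq, hT]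
        rcases hsat1 with h | h
        · simp [h, Set.encard_empty]
        · simp [h, Set.encard_empty]
  | bwd f₁ p f₂ =>
    obtain ⟨χ₁, h₁⟩ := filt_shape L f₁
    obtain ⟨χ₂, h₂⟩ := filt_shape L f₂
    refine ⟨if n = 0 then L.top else L.andl χ₁ (L.geq n (Sum.inl p) true χ₂),
      L.orl (L.notl χ₁) (L.leq n (Sum.inl p) true χ₂), fun G v => ?_⟩
    simp only [cshapeSat]
    have hT : {u : NV | (if true then tripleRel G (Sum.inl p) u v
        else tripleRel G (Sum.inl p) v u) ∧ L.sat G u χ₂}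
        = {u : NV | tripleRel G (Sum.inl p) u v ∧ cfilterSem semVT G f₂ u u} := by
      ext u
      simp only [Set.mem_setOf_eq, if_pos rfl]
      exact and_congr_right fun htr => h₂ G u (tripleRel_src_node htr)
    by_cases hc : cfilterSem semVT G f₁ v v
    · have hn : NodeG G v := (cfilterSem_eq hc).2
      have hS : {v' : NV | onePathSem semVT G (OnePath.bwd f₁ p f₂) v v'}
          = {u : NV | tripleRel G (Sum.inl p) u v ∧ cfilterSem semVT G f₂ u u} := by
        ext v'
        simp only [Set.mem_setOf_eq, onePathSem]
        constructor
        · rintro ⟨c, c', hf1, htr, hf2⟩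
          obtain ⟨rfl, -⟩ := cfilterSem_eq hf1
          obtain ⟨rfl, -⟩ := cfilterSem_eq hf2
          exact ⟨htr, hf2⟩
        · rintro ⟨htr, hf2⟩
          exact ⟨v, v', hc, htr, hf2⟩
      rw [hS]
      constructor
      · rcases Nat.eq_zero_or_pos n with rfl | hpos
        · rw [if_pos rfl]
          simpa using L.sat_top G v
        · rw [if_neg hpos.ne', L.sat_and, L.sat_geq, hT, h₁ G v hn]
          simp [hc]
      · rw [L.sat_or, L.sat_not, L.sat_leq, hT, h₁ G v hn]
        simp [hc]
    · have hS : {v' : NV | onePathSem semVT G (OnePath.bwd f₁ p f₂) v v'} = ∅ := by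
        ext v'
        simp only [Set.mem_setOf_eq, onePathSem, Set.mem_empty_iff_false, iff_false, not_exists]
        rintro c c' ⟨hf1, -, -⟩
        obtain ⟨rfl, -⟩ := cfilterSem_eq hf1
        exact hc hf1
      rw [hS]
      have hsat1 : ¬ L.sat G v χ₁ ∨ {u : NV | tripleRel G (Sum.inl p) u v
          ∧ cfilterSem semVT G f₂ u u} = ∅ := by
        by_cases hn : NodeG G v
        · exact Or.inl fun h => hc ((h₁ G v hn).1 h)
        · refine Or.inr ?_
          ext u
          simp only [Set.mem_setOf_eq, Set.mem_empty_iff_false, iff_false, not_and]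
          exact fun htr _ => hn (tripleRel_inl_tgt htr)
      constructor
      · rcases Nat.eq_zero_or_pos n with rfl | hpos
        · rw [if_pos rfl]
          simpa using L.sat_top G v
        · rw [if_neg hpos.ne', L.sat_and, L.sat_geq, hT, natCast_le_encard_empty]
          constructor
          · rintro ⟨hχ, hle⟩
            rcases hsat1 with h | h
            · exact absurd hχ h
            · exact (natCast_le_encard_empty n).1 (h ▸ hle)
          · intro h0
            exact absurd h0 hpos.ne'
      · rw [L.sat_or, L.sat_not, L.sat_leq, hT]
        rcases hsat1 with h | h
        · simp [h, Set.encard_empty]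
        · simp [h, Set.encard_empty]
  | toKey f k =>
    obtain ⟨χ₁, h₁⟩ := filt_shape L f
    refine ⟨if n = 0 then L.top else L.andl χ₁ (L.geq n (Sum.inr k) false L.top),
      L.orl (L.notl χ₁) (L.leq n (Sum.inr k) false L.top), fun G v => ?_⟩
    simp only [cshapeSat]
    have hT : {u : NV | (if false then tripleRel G (Sum.inr k) u v
        else tripleRel G (Sum.inr k) v u) ∧ L.sat G u L.top}
        = {u : NV | tripleRel G (Sum.inr k) v u} := by
      ext u
      simp only [Set.mem_setOf_eq, if_neg Bool.false_ne_true, and_iff_left_iff_imp]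
      exact fun _ => L.sat_top G u
    by_cases hc : cfilterSem semVT G f v v
    · have hn : NodeG G v := (cfilterSem_eq hc).2
      have hS : {v' : NV | onePathSem semVT G (OnePath.toKey f k) v v'}
          = {u : NV | tripleRel G (Sum.inr k) v u} := by
        ext v'
        simp only [Set.mem_setOf_eq, onePathSem]
        constructor
        · rintro ⟨c, hf1, hkr⟩
          obtain ⟨rfl, -⟩ := cfilterSem_eq hf1
          exact (keyRel_eq_tripleRel G k v v').1 hkr
        · intro htr
          exact ⟨v, hc, (keyRel_eq_tripleRel G k v v').2 htr⟩
      rw [hS]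
      constructor
      · rcases Nat.eq_zero_or_pos n with rfl | hpos
        · rw [if_pos rfl]
          simpa using L.sat_top G v
        · rw [if_neg hpos.ne', L.sat_and, L.sat_geq, hT, h₁ G v hn]
          simp [hc]
      · rw [L.sat_or, L.sat_not, L.sat_leq, hT, h₁ G v hn]
        simp [hc]
    · have hS : {v' : NV | onePathSem semVT G (OnePath.toKey f k) v v'} = ∅ := by
        ext v'
        simp only [Set.mem_setOf_eq, onePathSem, Set.mem_empty_iff_false, iff_false, not_exists]
        rintro c ⟨hf1, -⟩
        obtain ⟨rfl, -⟩ := cfilterSem_eq hf1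
        exact hc hf1
      rw [hS]
      have hsat1 : ¬ L.sat G v χ₁ ∨ {u : NV | tripleRel G (Sum.inr k) v u} = ∅ := by
        by_cases hn : NodeG G v
        · exact Or.inl fun h => hc ((h₁ G v hn).1 h)
        · refine Or.inr ?_
          ext u
          simp only [Set.mem_setOf_eq, Set.mem_empty_iff_false, iff_false]
          exact fun htr => hn (tripleRel_src_node htr)
      constructor
      · rcases Nat.eq_zero_or_pos n with rfl | hpos
        · rw [if_pos rfl]
          simpa using L.sat_top G v
        · rw [if_neg hpos.ne', L.sat_and, L.sat_geq, hT, natCast_le_encard_empty]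
          constructor
          · rintro ⟨hχ, hle⟩
            rcases hsat1 with h | h
            · exact absurd hχ h
            · exact (natCast_le_encard_empty n).1 (h ▸ hle)
          · intro h0
            exact absurd h0 hpos.ne'
      · rw [L.sat_or, L.sat_not, L.sat_leq, hT]
        rcases hsat1 with h | h
        · simp [h, Set.encard_empty]
        · simp [h, Set.encard_empty]
  | fromKey k f =>
    obtain ⟨χ₁, h₁⟩ := filt_shape L f
    refine ⟨L.geq n (Sum.inr k) true χ₁, L.leq n (Sum.inr k) true χ₁, fun G v => ?_⟩
    simp only [cshapeSat]
    have hS : {v' : NV | onePathSem semVT G (OnePath.fromKey k f) v v'}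
        = {u : NV | (if true then tripleRel G (Sum.inr k) u v
            else tripleRel G (Sum.inr k) v u) ∧ L.sat G u χ₁} := by
      ext v'
      simp only [Set.mem_setOf_eq, onePathSem, if_pos rfl]
      constructor
      · rintro ⟨c, hkr, hf1⟩
        obtain ⟨he, hnc⟩ := cfilterSem_eq hf1
        subst he
        exact ⟨(keyRel_eq_tripleRel G k _ v).1 hkr, (h₁ G _ hnc).2 hf1⟩
      · rintro ⟨htr, hsat⟩
        have hnc : NodeG G v' := tripleRel_src_node htr
        exact ⟨v', (keyRel_eq_tripleRel G k v' v).2 htr, (h₁ G v' hnc).1 hsat⟩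
    rw [hS]
    exact ⟨(L.sat_geq G v n (Sum.inr k) true χ₁), (L.sat_leq G v n (Sum.inr k) true χ₁)⟩

end Counting
section Shapes

open Classical

variable {VT : Type} {semVT : VT → Set GValue} (L : GLogic VT semVT)

lemma keyRel_not_inl {G : CommonGraph} {k : GKey} {c : NV} {u : GNode} :
    ¬ keyRel G k c (Sum.inl u) := by
  rcases c with u' | w' <;> simp [keyRel]

/-- Translation of common shapes: one shape for node focuses, one for value focuses. -/
lemma cshape_shape (φ : CShape VT) : ∃ χN χV : L.A, ∀ G,
    (∀ v, NodeG G v → (L.sat G v χN ↔ cshapeSat semVT G v φ)) ∧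
    (∀ w, L.sat G (Sum.inr w) χV ↔ cshapeSat semVT G (Sum.inr w) φ) := by
  induction φ with
  | exist π =>
    cases π with
    | base π =>
      obtain ⟨χf, χb, h⟩ := bpath_shape L π L.top
      refine ⟨χf, L.bot, fun G => ⟨fun v hn => ?_, fun w => ?_⟩⟩
      · rw [(h G v hn).1]
        simp only [cshapeSat, cpathSem]
        exact exists_congr fun v' => and_iff_left_of_imp fun _ => L.sat_top G v'
      · simp only [cshapeSat, cpathSem]
        constructor
        · intro hs; exact absurd hs (L.sat_bot G _)
        · rintro ⟨v', hb⟩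
          obtain ⟨⟨u, hu, -⟩, -⟩ := bpathSem_node hb
          exact absurd hu (by simp)
    | toKey π k =>
      obtain ⟨χf, χb, h⟩ := bpath_shape L π (L.geq 1 (Sum.inr k) false L.top)
      refine ⟨χf, L.bot, fun G => ⟨fun v hn => ?_, fun w => ?_⟩⟩
      · rw [(h G v hn).1]
        simp only [cshapeSat, cpathSem]
        constructor
        · rintro ⟨c, hb, hs⟩
          rw [L.sat_geq_one] at hs
          obtain ⟨u', htr, -⟩ := hs
          simp only [if_neg Bool.false_ne_true] at htr
          exact ⟨u', c, hb, (keyRel_eq_tripleRel G k c u').2 htr⟩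
        · rintro ⟨v', c, hb, hk⟩
          refine ⟨c, hb, ?_⟩
          rw [L.sat_geq_one]
          exact ⟨v', by simpa using (keyRel_eq_tripleRel G k c v').1 hk, L.sat_top G v'⟩
      · simp only [cshapeSat, cpathSem]
        constructor
        · intro hs; exact absurd hs (L.sat_bot G _)
        · rintro ⟨v', c, hb, -⟩
          obtain ⟨⟨u, hu, -⟩, -⟩ := bpathSem_node hb
          exact absurd hu (by simp)
    | fromKey k π =>
      obtain ⟨χf, χb, h⟩ := bpath_shape L π L.top
      refine ⟨L.bot, L.geq 1 (Sum.inr k) true χf, fun G => ⟨fun v hn => ?_, fun w => ?_⟩⟩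
      · obtain ⟨u, rfl, -⟩ := hn
        simp only [cshapeSat, cpathSem]
        constructor
        · intro hs; exact absurd hs (L.sat_bot G _)
        · rintro ⟨v', c, hk, -⟩
          exact absurd hk keyRel_not_inl
      · rw [L.sat_geq_one]
        simp only [cshapeSat, cpathSem]
        constructor
        · rintro ⟨c, htr, hs⟩
          replace htr : tripleRel G (Sum.inr k) c (Sum.inr w) := by simpa using htr
          have hnc : NodeG G c := tripleRel_src_node htr
          obtain ⟨v', hb, -⟩ := ((h G c hnc).1).1 hs
          exact ⟨v', c, (keyRel_eq_tripleRel G k c _).2 htr, hb⟩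
        · rintro ⟨v', c, hk, hb⟩
          have htr := (keyRel_eq_tripleRel G k c _).1 hk
          have hnc : NodeG G c := tripleRel_src_node htr
          exact ⟨c, by simpa using htr, ((h G c hnc).1).2 ⟨v', hb, L.sat_top G v'⟩⟩
    | between k π k' =>
      obtain ⟨χf, χb, h⟩ := bpath_shape L π (L.geq 1 (Sum.inr k') false L.top)
      refine ⟨L.bot, L.geq 1 (Sum.inr k) true χf, fun G => ⟨fun v hn => ?_, fun w => ?_⟩⟩
      · obtain ⟨u, rfl, -⟩ := hn
        simp only [cshapeSat, cpathSem]
        constructor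
        · intro hs; exact absurd hs (L.sat_bot G _)
        · rintro ⟨v', c, c', hk, -⟩
          exact absurd hk keyRel_not_inl
      · rw [L.sat_geq_one]
        simp only [cshapeSat, cpathSem]
        constructor
        · rintro ⟨c, htr, hs⟩
          replace htr : tripleRel G (Sum.inr k) c (Sum.inr w) := by simpa using htr
          have hnc : NodeG G c := tripleRel_src_node htr
          obtain ⟨c', hb, hs'⟩ := ((h G c hnc).1).1 hs
          rw [L.sat_geq_one] at hs'
          obtain ⟨v', htr', -⟩ := hs'
          simp only [if_neg Bool.false_ne_true] at htr'
          exact ⟨v', c, c', (keyRel_eq_tripleRel G k c _).2 htr, hb,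
            (keyRel_eq_tripleRel G k' c' v').2 htr'⟩
        · rintro ⟨v', c, c', hk, hb, hk'⟩
          have htr := (keyRel_eq_tripleRel G k c _).1 hk
          have hnc : NodeG G c := tripleRel_src_node htr
          refine ⟨c, by simpa using htr, ((h G c hnc).1).2 ⟨c', hb, ?_⟩⟩
          rw [L.sat_geq_one]
          exact ⟨v', by simpa using (keyRel_eq_tripleRel G k' c' v').1 hk', L.sat_top G v'⟩
    | keyOnly k =>
      refine ⟨L.geq 1 (Sum.inr k) false L.top, L.geq 1 (Sum.inr k) false L.top,
        fun G => ⟨fun v _ => ?_, fun w => ?_⟩⟩ <;>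
      · rw [L.sat_geq_one]
        simp only [cshapeSat, cpathSem]
        constructor
        · rintro ⟨u', htr, -⟩
          simp only [if_neg Bool.false_ne_true] at htr
          exact ⟨u', (keyRel_eq_tripleRel G k _ u').2 htr⟩
        · rintro ⟨v', hk⟩
          exact ⟨v', by simpa using (keyRel_eq_tripleRel G k _ v').1 hk, L.sat_top G v'⟩
  | atMost n op =>
    obtain ⟨χg, χl, h⟩ := onePath_shape L op n
    exact ⟨χl, χl, fun G => ⟨fun v _ => (h G v).2, fun w => (h G (Sum.inr w)).2⟩⟩
  | atLeast n op =>
    obtain ⟨χg, χl, h⟩ := onePath_shape L op n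
    exact ⟨χg, χg, fun G => ⟨fun v _ => (h G v).1, fun w => (h G (Sum.inr w)).1⟩⟩
  | closedNode ν P =>
    obtain ⟨χ, hχ⟩ := closedNode_shape L ν P
    refine ⟨χ, L.bot, fun G => ⟨fun v hn => ?_, fun w => ?_⟩⟩
    · obtain ⟨u, rfl, -⟩ := hn
      exact hχ G u
    · simp only [cshapeSat]
      constructor
      · intro hs; exact absurd hs (L.sat_bot G _)
      · rintro ⟨⟨u, hu, -⟩, -⟩
        exact absurd hu (by simp)
  | and φ₁ φ₂ ih₁ ih₂ =>
    obtain ⟨χ₁N, χ₁V, h₁⟩ := ih₁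
    obtain ⟨χ₂N, χ₂V, h₂⟩ := ih₂
    refine ⟨L.andl χ₁N χ₂N, L.andl χ₁V χ₂V, fun G => ⟨fun v hn => ?_, fun w => ?_⟩⟩
    · rw [L.sat_and, ((h₁ G).1 v hn), ((h₂ G).1 v hn)]
      rfl
    · rw [L.sat_and, ((h₁ G).2 w), ((h₂ G).2 w)]
      rfl

end Shapes
section Selectors

open Classical

variable {VT : Type} {semVT : VT → Set GValue}

/-- The three kinds of selectors available in both SHACL and ShEx. -/
inductive SelKind : Type
  | out (q : PK)
  | inn (q : PK)
  | cst (c : GValue)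

/-- Semantics of a selector kind. -/
def wsat (G : CommonGraph) (v : NV) : SelKind → Prop
  | .out q => ∃ u, tripleRel G q v u
  | .inn q => ∃ u, tripleRel G q u v
  | .cst c => v = Sum.inr c

/-- Whether the selector kind guarantees a node focus. -/
def nodeKind : SelKind → Bool
  | .out _ => true
  | .inn (Sum.inl _) => true
  | .inn (Sum.inr _) => false
  | .cst _ => false

lemma wsat_kind {G : CommonGraph} {v : NV} {sk : SelKind} (h : wsat G v sk) :
    if nodeKind sk then NodeG G v else ∃ w, v = Sum.inr w := by
  cases sk with
  | out q =>
    obtain ⟨u, htr⟩ := h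
    simpa [nodeKind] using tripleRel_src_node htr
  | inn q =>
    cases q with
    | inl p =>
      obtain ⟨u, htr⟩ := h
      simpa [nodeKind] using tripleRel_inl_tgt htr
    | inr k =>
      obtain ⟨u, htr⟩ := h
      simpa [nodeKind] using tripleRel_inr_tgt htr
  | cst c =>
    simp only [nodeKind, if_neg Bool.false_ne_true]
    exact ⟨c, h⟩

lemma exist_ext_bpath {π : BPath VT} {k? : Option GKey} {G : CommonGraph} {v : NV}
    (h : cshapeSat semVT G v (CShape.exist (CPath.ext π k?))) :
    ∃ v', bpathSem semVT G π v v' := by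
  cases k? with
  | none =>
    obtain ⟨v', hb⟩ := h
    exact ⟨v', hb⟩
  | some k' =>
    obtain ⟨v', c, hb, -⟩ := h
    exact ⟨c, hb⟩

lemma sel_weaken (sel : CShape VT) (h : IsCommonSelector sel) :
    ∃ sk : SelKind, ∀ G v, cshapeSat semVT G v sel → wsat G v sk := by
  rcases h with ⟨k, rfl⟩ | ⟨p, π, k?, rfl⟩ | ⟨p, π, k?, rfl⟩ | ⟨k, c, π, k?, rfl⟩ |
    ⟨k, τ, π, k?, rfl⟩ | ⟨k, π, rfl⟩ | ⟨k, π, k', rfl⟩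
  · refine ⟨.out (Sum.inr k), fun G v hs => ?_⟩
    obtain ⟨v', hk⟩ := hs
    exact ⟨v', (keyRel_eq_tripleRel G k v v').1 hk⟩
  · refine ⟨.out (Sum.inl p), fun G v hs => ?_⟩
    obtain ⟨v', c, h1, -⟩ := exist_ext_bpath hs
    exact ⟨c, h1⟩
  · refine ⟨.inn (Sum.inl p), fun G v hs => ?_⟩
    obtain ⟨v', c, h1, -⟩ := exist_ext_bpath hs
    exact ⟨c, h1⟩
  · refine ⟨.out (Sum.inr k), fun G v hs => ?_⟩
    obtain ⟨v', c₀, h1, -⟩ := exist_ext_bpath hs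
    obtain ⟨-, u, rfl, -, hm⟩ := h1
    exact ⟨Sum.inr c, by simpa [tripleRel] using hm⟩
  · refine ⟨.out (Sum.inr k), fun G v hs => ?_⟩
    obtain ⟨v', c₀, h1, -⟩ := exist_ext_bpath hs
    obtain ⟨-, u, rfl, -, hm⟩ := h1
    obtain ⟨w, hw, hmem⟩ := (mem_openCT_iff (CCType.single k τ) (content_record G u)).1 hm
    exact ⟨Sum.inr w, by simpa [tripleRel, content] using hmem⟩
  · refine ⟨.inn (Sum.inr k), fun G v hs => ?_⟩
    obtain ⟨v', c, hk, -⟩ := hs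
    exact ⟨c, (keyRel_eq_tripleRel G k c v).1 hk⟩
  · refine ⟨.inn (Sum.inr k), fun G v hs => ?_⟩
    obtain ⟨v', c, c', hk, -⟩ := hs
    exact ⟨c, (keyRel_eq_tripleRel G k c v).1 hk⟩

variable (L : GLogic VT semVT)

/-- Main generic translation of a schema pair. -/
lemma pair_translate (sel φ : CShape VT) (hsel : IsCommonSelector sel) :
    ∃ (sk : SelKind) (body : L.A), ∀ G,
      ((∀ v, wsat G v sk → L.sat G v body) ↔
       (∀ v, cshapeSat semVT G v sel → cshapeSat semVT G v φ)) := by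
  obtain ⟨sk, hsk⟩ := sel_weaken sel hsel
  obtain ⟨sN, sV, hs⟩ := cshape_shape L sel
  obtain ⟨fN, fV, hf⟩ := cshape_shape L φ
  refine ⟨sk, if nodeKind sk then L.orl (L.notl sN) fN else L.orl (L.notl sV) fV, fun G => ?_⟩
  cases hkind : nodeKind sk with
  | true =>
    rw [if_pos rfl]
    constructor
    · intro H v hselv
      have hw := hsk G v hselv
      have hnode : NodeG G v := by simpa [hkind] using wsat_kind hw
      have hb := H v hw
      rw [L.sat_or, L.sat_not, (hs G).1 v hnode, (hf G).1 v hnode] at hb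
      rcases hb with hb | hb
      · exact absurd hselv hb
      · exact hb
    · intro H v hw
      have hnode : NodeG G v := by simpa [hkind] using wsat_kind hw
      rw [L.sat_or, L.sat_not, (hs G).1 v hnode, (hf G).1 v hnode]
      by_cases hv : cshapeSat semVT G v sel
      · exact Or.inr (H v hv)
      · exact Or.inl hv
  | false =>
    rw [if_neg Bool.false_ne_true]
    constructor
    · intro H v hselv
      have hw := hsk G v hselv
      obtain ⟨w, rfl⟩ : ∃ w, v = Sum.inr w := by simpa [hkind] using wsat_kind hw
      have hb := H _ hw
      rw [L.sat_or, L.sat_not, (hs G).2 w, (hf G).2 w] at hb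
      rcases hb with hb | hb
      · exact absurd hselv hb
      · exact hb
    · intro H v hw
      obtain ⟨w, rfl⟩ : ∃ w, v = Sum.inr w := by simpa [hkind] using wsat_kind hw
      rw [L.sat_or, L.sat_not, (hs G).2 w, (hf G).2 w]
      by_cases hv : cshapeSat semVT G (Sum.inr w) sel
      · exact Or.inr (H _ hv)
      · exact Or.inl hv

end Selectors
section SHACLInst

open Classical

variable (VT : Type) (semVT : VT → Set GValue)

/-- SHACL as an instance of the abstract logic. -/
noncomputable def shaclLogic : GLogic VT semVT where
  A := SShape VT
  sat G v a := shaclSat semVT G v a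
  top := .top
  sat_top := fun G v => trivial
  andl := .and
  sat_and := fun G v a b => Iff.rfl
  orl := .or
  sat_or := fun G v a b => Iff.rfl
  notl := .not
  sat_not := fun G v a => Iff.rfl
  testC := .testC
  sat_testC := fun G v c => Iff.rfl
  testT := .testT
  sat_testT := fun G v τ => Iff.rfl
  geq := fun n q dir a => .geq n (if dir then .inv (.sym q) else .sym q) a
  sat_geq := fun G v n q dir a => by
    cases dir with
    | false =>
      simp only [if_neg Bool.false_ne_true]
      exact Iff.rfl
    | true =>
      simp only [if_pos rfl]
      exact Iff.rfl
  closedM := fun P K => .closed (P.image Sum.inl ∪ K.image Sum.inr)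
  sat_closedM := fun G v P K => by
    show (∀ q ∉ (P.image Sum.inl ∪ K.image Sum.inr : Finset PK), ∀ u, ¬ tripleRel G q v u) ↔ _
    constructor
    · intro h
      constructor
      · intro p hp u htr
        refine h (Sum.inl p) ?_ u htr
        simp only [Finset.mem_union, Finset.mem_image]
        push_neg
        exact ⟨fun p' _ hp' => hp (by injection hp' with h'; exact h' ▸ ‹p' ∈ P›), by simp⟩
      · intro k hk u htr
        refine h (Sum.inr k) ?_ u htr
        simp only [Finset.mem_union, Finset.mem_image]
        push_neg
        exact ⟨by simp, fun k' _ hk' => hk (by injection hk' with h'; exact h' ▸ ‹k' ∈ K›)⟩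
    · rintro ⟨hP, hK⟩ q hq u htr
      rcases q with p | k
      · refine hP p (fun hp => hq ?_) u htr
        exact Finset.mem_union.2 (Or.inl (Finset.mem_image.2 ⟨p, hp, rfl⟩))
      · refine hK k (fun hk => hq ?_) u htr
        exact Finset.mem_union.2 (Or.inr (Finset.mem_image.2 ⟨k, hk, rfl⟩))

/-- The SHACL selector corresponding to a selector kind. -/
def shaclSel : SelKind → SShape VT
  | .out q => .geq 1 (.sym q) .top
  | .inn q => .geq 1 (.inv (.sym q)) .top
  | .cst c => .testC c

lemma shaclSel_isSel (sk : SelKind) : IsSHACLSelector (shaclSel VT sk) := by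
  cases sk with
  | out q => exact Or.inl ⟨q, rfl⟩
  | inn q => exact Or.inr (Or.inl ⟨q, rfl⟩)
  | cst c => exact Or.inr (Or.inr ⟨c, rfl⟩)

lemma shaclSel_sat (G : CommonGraph) (v : NV) (sk : SelKind) :
    shaclSat semVT G v (shaclSel VT sk) ↔ wsat G v sk := by
  cases sk with
  | out q =>
    show ((1:ℕ) : ℕ∞) ≤ _ ↔ _
    rw [show ((1:ℕ) : ℕ∞) = 1 by norm_cast, Set.one_le_encard_iff_nonempty]
    constructor
    · rintro ⟨u, htr, -⟩; exact ⟨u, htr⟩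
    · rintro ⟨u, htr⟩; exact ⟨u, htr, trivial⟩
  | inn q =>
    show ((1:ℕ) : ℕ∞) ≤ _ ↔ _
    rw [show ((1:ℕ) : ℕ∞) = 1 by norm_cast, Set.one_le_encard_iff_nonempty]
    constructor
    · rintro ⟨u, htr, -⟩; exact ⟨u, htr⟩
    · rintro ⟨u, htr⟩; exact ⟨u, htr, trivial⟩
  | cst c => exact Iff.rfl

/-- SHACL half of the main theorem. -/
lemma shacl_half (S : CommonSchema VT) :
    ∃ S₁ : SHACLSchema VT, ∀ G : CommonGraph,
      commonValid semVT S G ↔ shaclValid semVT S₁ G := by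
  classical
  set L := shaclLogic VT semVT with hL
  have key : ∀ pr : CShape VT × CShape VT, pr ∈ S.pairs →
      ∃ (sk : SelKind) (body : SShape VT), ∀ G,
        ((∀ v, wsat G v sk → shaclSat semVT G v body) ↔
         (∀ v, cshapeSat semVT G v pr.1 → cshapeSat semVT G v pr.2)) :=
    fun pr h => pair_translate L pr.1 pr.2 (S.sel pr h)
  choose sk body hkey using key
  refine ⟨⟨S.pairs.attach.image (fun pr => (shaclSel VT (sk pr.1 pr.2), body pr.1 pr.2)), ?_⟩,
    fun G => ?_⟩
  · intro pr' hpr'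
    obtain ⟨a, -, rfl⟩ := Finset.mem_image.1 hpr'
    exact shaclSel_isSel VT _
  · constructor
    · intro h v pr' hpr' hsat
      obtain ⟨a, -, rfl⟩ := Finset.mem_image.1 hpr'
      refine (hkey a.1 a.2 G).2 (fun v' hs => h v' a.1 a.2 hs) v ?_
      exact (shaclSel_sat VT semVT G v _).1 hsat
    · intro h v pr hpr hsat
      refine (hkey pr hpr G).1 (fun v' hw => ?_) v hsat
      exact h v' _ (Finset.mem_image.2 ⟨⟨pr, hpr⟩, Finset.mem_attach _ _, rfl⟩)
        ((shaclSel_sat VT semVT G v' _).2 hw)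

end SHACLInst
section ShExBasics

open Classical

variable {VT : Type} {semVT : VT → Set GValue}

lemma tripleRel_wt_fwd {G : CommonGraph} {q a b} (h : tripleRel G q a b) :
    STriple.wellTyped ⟨a, q, false, b⟩ := by
  rcases q with p | k <;> rcases a with u | w <;> rcases b with u' | w' <;>
    simp [tripleRel] at h <;> simp [STriple.wellTyped]

lemma tripleRel_wt_bwd {G : CommonGraph} {q a b} (h : tripleRel G q a b) :
    STriple.wellTyped ⟨b, q, true, a⟩ := by
  rcases q with p | k <;> rcases a with u | w <;> rcases b with u' | w' <;>
    simp [tripleRel] at h <;> simp [STriple.wellTyped]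

lemma neighPM_src {G : CommonGraph} {v : NV} {t : STriple} (h : t ∈ neighPM G v) :
    t.src = v := by
  rcases h with ⟨-, h, -⟩ | ⟨-, h, -⟩ <;> exact h

lemma neighPM_wt {G : CommonGraph} {v : NV} {t : STriple} (h : t ∈ neighPM G v) :
    t.wellTyped := by
  obtain ⟨a, q, iv, b⟩ := t
  rcases h with ⟨hinv, hsrc, htr⟩ | ⟨hinv, hsrc, htr⟩ <;>
      simp only at hinv hsrc htr <;> subst hinv <;> subst hsrc
  · exact tripleRel_wt_fwd htr
  · exact tripleRel_wt_bwd htr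

/-- Forward reading of a triple. -/
def tripleFwd : Triple → STriple
  | .edge u p w => ⟨Sum.inl u, Sum.inl p, false, Sum.inl w⟩
  | .prop u k w => ⟨Sum.inl u, Sum.inr k, false, Sum.inr w⟩

/-- Backward reading of a triple. -/
def tripleBwd : Triple → STriple
  | .edge u p w => ⟨Sum.inl w, Sum.inl p, true, Sum.inl u⟩
  | .prop u k w => ⟨Sum.inr w, Sum.inr k, true, Sum.inl u⟩

lemma neighPM_finite (G : CommonGraph) (v : NV) : (neighPM G v).Finite := by
  refine Set.Finite.subset (G.triples.image tripleFwd ∪ G.triples.image tripleBwd).finite_toSet ?_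
  rintro ⟨a, q, iv, b⟩ (⟨hinv, hsrc, htr⟩ | ⟨hinv, hsrc, htr⟩) <;>
      simp only at hinv hsrc htr <;> subst hinv <;> subst hsrc
  · rcases q with p | k <;> rcases a with u | w <;> rcases b with u' | w' <;>
        simp only [tripleRel] at htr
    · exact Finset.mem_coe.2 (Finset.mem_union.2 (Or.inl (Finset.mem_image.2 ⟨_, htr, rfl⟩)))
    · exact Finset.mem_coe.2 (Finset.mem_union.2 (Or.inl (Finset.mem_image.2 ⟨_, htr, rfl⟩)))
  · rcases q with p | k <;> rcases a with u | w <;> rcases b with u' | w' <;>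
        simp only [tripleRel] at htr
    · exact Finset.mem_coe.2 (Finset.mem_union.2 (Or.inr (Finset.mem_image.2 ⟨_, htr, rfl⟩)))
    · exact Finset.mem_coe.2 (Finset.mem_union.2 (Or.inr (Finset.mem_image.2 ⟨_, htr, rfl⟩)))

/-- Families of singletons. -/
def singFam (P : STriple → Prop) : Set (Set STriple) := {X | ∃ t, P t ∧ X = {t}}

lemma foldr_union_map_singleton (l : List STriple) :
    (l.map (fun t => ({t} : Set STriple))).foldr (· ∪ ·) ∅ = {t | t ∈ l} := by
  induction l with
  | nil => simp
  | cons a l ih =>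
    simp only [List.map_cons, List.foldr_cons, ih]
    ext t
    simp

lemma foldr_union_singFam {P : STriple → Prop} (l : List (Set STriple))
    (hl : ∀ X ∈ l, X ∈ singFam P) :
    (l.foldr (· ∪ ·) ∅).Finite ∧ ∀ t ∈ l.foldr (· ∪ ·) ∅, P t := by
  induction l with
  | nil => simp
  | cons X l ih =>
    obtain ⟨t, hPt, rfl⟩ := hl X List.mem_cons_self
    obtain ⟨hfin, hmem⟩ := ih (fun Y hY => hl Y (List.mem_cons_of_mem _ hY))
    refine ⟨(Set.finite_singleton t).union hfin, ?_⟩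
    rintro t' ht'
    rcases ht' with h | h
    · rwa [Set.mem_singleton_iff.1 h]
    · exact hmem t' h

lemma mem_starSem_singFam {P : STriple → Prop} {T : Set STriple} :
    T ∈ starSem (singFam P) ↔ T.Finite ∧ ∀ t ∈ T, P t := by
  constructor
  · rintro ⟨l, hl, -, rfl⟩
    exact foldr_union_singFam l hl
  · rintro ⟨hfin, hP⟩
    refine ⟨hfin.toFinset.toList.map (fun t => ({t} : Set STriple)), ?_, ?_, ?_⟩
    · rintro X hX
      obtain ⟨t, ht, rfl⟩ := List.mem_map.1 hX
      exact ⟨t, hP t (by simpa using ht), rfl⟩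
    · exact List.Pairwise.map _
        (fun a b hab => Set.singleton_inter_eq_empty.2 (by simpa using hab))
        (Finset.nodup_toList _)
    · rw [foldr_union_map_singleton]
      ext t
      simp

end ShExBasics
section ShExCore

open Classical

variable {VT : Type} {semVT : VT → Set GValue}

lemma negSem_eq_singFam (v : NV) (Q : Finset PK) (b : Bool) :
    negSem v Q b = singFam (fun t => t.wellTyped ∧ t.src = v ∧ t.inv = b ∧ t.sym ∉ Q) := by
  ext T
  constructor
  · rintro ⟨t, h1, h2, h3, h4, rfl⟩; exact ⟨t, ⟨h1, h2, h3, h4⟩, rfl⟩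
  · rintro ⟨t, ⟨h1, h2, h3, h4⟩, rfl⟩; exact ⟨t, h1, h2, h3, h4, rfl⟩

/-- `n`-fold sequential repetition of a triple expression. -/
def teIter {VT : Type} (e : TExpr VT) : ℕ → TExpr VT
  | 0 => .eps
  | n + 1 => .seq e (teIter e n)

lemma teSem_teIter {G : CommonGraph} {v : NV} {e : TExpr VT} {P : STriple → Prop}
    (He : ∀ T, T ∈ teSem semVT G v e ↔ ∃ t, P t ∧ T = {t}) (n : ℕ) (T : Set STriple) :
    T ∈ teSem semVT G v (teIter e n) ↔
      ∃ S : Finset STriple, S.card = n ∧ ↑S = T ∧ ∀ t ∈ S, P t := by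
  induction n generalizing T with
  | zero =>
    show T ∈ ({∅} : Set (Set STriple)) ↔ _
    constructor
    · rintro rfl
      exact ⟨∅, rfl, by simp, by simp⟩
    · rintro ⟨S, hcard, rfl, -⟩
      rw [Finset.card_eq_zero.1 hcard]
      simp
  | succ n ih =>
    show T ∈ seqSem (teSem semVT G v e) (teSem semVT G v (teIter e n)) ↔ _
    constructor
    · rintro ⟨T₁, hT₁, T₂, hT₂, hd, rfl⟩
      obtain ⟨t, hPt, rfl⟩ := (He T₁).1 hT₁
      obtain ⟨S, hcard, rfl, hPS⟩ := (ih T₂).1 hT₂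
      have htS : t ∉ S := by
        intro hmem
        have : t ∈ ({t} : Set STriple) ∩ ↑S := ⟨rfl, hmem⟩
        rw [hd] at this
        exact this
      refine ⟨insert t S, ?_, ?_, ?_⟩
      · rw [Finset.card_insert_of_notMem htS, hcard]
      · simp
      · intro t' ht'
        rcases Finset.mem_insert.1 ht' with rfl | h
        · exact hPt
        · exact hPS t' h
    · rintro ⟨S, hcard, rfl, hPS⟩
      have hpos : 0 < S.card := by rw [hcard]; exact Nat.succ_pos n
      obtain ⟨t, ht⟩ := Finset.card_pos.1 hpos
      refine ⟨{t}, (He _).2 ⟨t, hPS t ht, rfl⟩, ↑(S.erase t), (ih _).2 ⟨S.erase t, ?_, rfl,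
        fun t' ht' => hPS t' (Finset.mem_of_mem_erase ht')⟩, ?_, ?_⟩
      · rw [Finset.card_erase_of_mem ht, hcard]
        rfl
      · rw [Set.singleton_inter_eq_empty]
        simp
      · ext x
        simp only [Set.singleton_union, Finset.coe_erase, Set.mem_insert_iff, Set.mem_diff,
          Finset.mem_coe]
        constructor
        · intro hx
          by_cases hxt : x = t
          · exact Or.inl hxt
          · exact Or.inr ⟨hx, by simpa using hxt⟩
        · rintro (rfl | ⟨hx, -⟩)
          · exact ht
          · exact hx

/-- Open ShEx neighbourhood shapes absorb the rest of the neighbourhood. -/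
lemma shexSat_neighOpen_iff (G : CommonGraph) (v : NV) (e : TExpr VT) :
    shexSat semVT G v (ShExShape.neighOpen e ∅ ∅) ↔
      ∃ T ∈ teSem semVT G v e, T ⊆ neighPM G v := by
  show neighPM G v ∈ seqSem (seqSem (teSem semVT G v e) (starSem (negSem v ∅ true)))
      (starSem (negSem v ∅ false)) ↔ _
  constructor
  · rintro ⟨T₁₂, ⟨T, hT, T₂, hT₂, hd, rfl⟩, T₃, hT₃, hd', heq⟩
    refine ⟨T, hT, ?_⟩
    intro t ht
    rw [heq]
    exact Or.inl (Or.inl ht)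
  · rintro ⟨T, hT, hsub⟩
    have hfin := neighPM_finite G v
    refine ⟨T ∪ ((neighPM G v \ T) ∩ {t | t.inv = true}),
      ⟨T, hT, (neighPM G v \ T) ∩ {t | t.inv = true}, ?_, ?_, rfl⟩,
      (neighPM G v \ T) ∩ {t | t.inv = false}, ?_, ?_, ?_⟩
    · rw [negSem_eq_singFam, mem_starSem_singFam]
      refine ⟨(hfin.subset Set.diff_subset).subset Set.inter_subset_left, ?_⟩
      rintro t ⟨⟨hmem, -⟩, hinv⟩
      exact ⟨neighPM_wt hmem, neighPM_src hmem, hinv, Finset.notMem_empty _⟩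
    · ext x
      simp only [Set.mem_inter_iff, Set.mem_diff, Set.mem_empty_iff_false, iff_false]
      rintro ⟨hx, ⟨-, hnx⟩, -⟩
      exact hnx hx
    · rw [negSem_eq_singFam, mem_starSem_singFam]
      refine ⟨(hfin.subset Set.diff_subset).subset Set.inter_subset_left, ?_⟩
      rintro t ⟨⟨hmem, -⟩, hinv⟩
      exact ⟨neighPM_wt hmem, neighPM_src hmem, hinv, Finset.notMem_empty _⟩
    · ext x
      simp only [Set.mem_inter_iff, Set.mem_union, Set.mem_diff, Set.mem_setOf_eq,
        Set.mem_empty_iff_false, iff_false]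
      rintro ⟨hl, ⟨hmem, hnx⟩, hinv⟩
      rcases hl with h | ⟨-, hinv'⟩
      · exact hnx h
      · rw [hinv] at hinv'
        exact Bool.false_ne_true hinv'
    · ext x
      simp only [Set.mem_union, Set.mem_inter_iff, Set.mem_diff, Set.mem_setOf_eq]
      constructor
      · intro hx
        by_cases hxT : x ∈ T
        · exact Or.inl (Or.inl hxT)
        · cases hinv : x.inv
          · exact Or.inr ⟨⟨hx, hxT⟩, rfl⟩
          · exact Or.inl (Or.inr ⟨⟨hx, hxT⟩, rfl⟩)
      · rintro ((h | ⟨⟨h, -⟩, -⟩) | ⟨⟨h, -⟩, -⟩)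
        exacts [hsub h, h, h]

lemma shexTop_sat (G : CommonGraph) (v : NV) : shexSat semVT G v (shexTop (VT := VT)) := by
  rw [shexTop, shexSat_neighOpen_iff]
  exact ⟨∅, rfl, Set.empty_subset _⟩

end ShExCore
section ShExGeq

open Classical

variable {VT : Type} {semVT : VT → Set GValue}

lemma He_fwd (G : CommonGraph) (v : NV) (q : PK) (φ : ShExShape VT) :
    ∀ T, T ∈ teSem semVT G v (TExpr.fwd q φ) ↔
      ∃ t : STriple, (t.wellTyped ∧ t.src = v ∧ t.sym = q ∧ t.inv = false ∧
        shexSat semVT G t.tgt φ) ∧ T = {t} := by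
  intro T
  constructor
  · rintro ⟨t, h1, h2, h3, h4, h5, rfl⟩; exact ⟨t, ⟨h1, h2, h3, h4, h5⟩, rfl⟩
  · rintro ⟨t, ⟨h1, h2, h3, h4, h5⟩, rfl⟩; exact ⟨t, h1, h2, h3, h4, h5, rfl⟩

lemma He_bwd (G : CommonGraph) (v : NV) (q : PK) (φ : ShExShape VT) :
    ∀ T, T ∈ teSem semVT G v (TExpr.bwd q φ) ↔
      ∃ t : STriple, (t.wellTyped ∧ t.src = v ∧ t.sym = q ∧ t.inv = true ∧
        shexSat semVT G t.tgt φ) ∧ T = {t} := by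
  intro T
  constructor
  · rintro ⟨t, h1, h2, h3, h4, h5, rfl⟩; exact ⟨t, ⟨h1, h2, h3, h4, h5⟩, rfl⟩
  · rintro ⟨t, ⟨h1, h2, h3, h4, h5⟩, rfl⟩; exact ⟨t, h1, h2, h3, h4, h5, rfl⟩

lemma shexSat_geq (G : CommonGraph) (v : NV) (n : ℕ) (q : PK) (dir : Bool) (φ : ShExShape VT) :
    shexSat semVT G v (ShExShape.neighOpen
        (teIter (if dir then TExpr.bwd q φ else TExpr.fwd q φ) n) ∅ ∅) ↔
      (n : ℕ∞) ≤ {u : NV | (if dir then tripleRel G q u v else tripleRel G q v u) ∧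
        shexSat semVT G u φ}.encard := by
  cases dir with
  | false =>
    simp only [if_neg Bool.false_ne_true]
    set U := {u : NV | tripleRel G q v u ∧ shexSat semVT G u φ} with hU
    rw [shexSat_neighOpen_iff]
    constructor
    · rintro ⟨T, hT, hsub⟩
      obtain ⟨S, hcard, rfl, hPS⟩ := (teSem_teIter (He_fwd G v q φ) n T).1 hT
      have him : ↑(S.image STriple.tgt) ⊆ U := by
        rintro x hx
        obtain ⟨t, ht, rfl⟩ := Finset.mem_image.1 (Finset.mem_coe.1 hx)
        obtain ⟨-, -, hsym, hinv, hsat⟩ := hPS t ht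
        have hmem := hsub (Finset.mem_coe.2 ht)
        rcases hmem with ⟨-, -, htr⟩ | ⟨hinv', -, -⟩
        · rw [hsym] at htr
          exact ⟨htr, hsat⟩
        · rw [hinv] at hinv'
          exact absurd hinv' Bool.false_ne_true
      have hinj : (S.image STriple.tgt).card = n := by
        rw [← hcard]
        apply Finset.card_image_of_injOn
        intro t₁ h₁ t₂ h₂ heq
        obtain ⟨-, s1, y1, i1, -⟩ := hPS t₁ h₁
        obtain ⟨-, s2, y2, i2, -⟩ := hPS t₂ h₂
        cases t₁; cases t₂; simp_all
      calc (n : ℕ∞) = ((S.image STriple.tgt).card : ℕ∞) := by rw [hinj]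
        _ = (↑(S.image STriple.tgt) : Set NV).encard :=
            (Set.encard_coe_eq_coe_finsetCard _).symm
        _ ≤ U.encard := Set.encard_mono him
    · intro hle
      obtain ⟨V, hVsub, hVcard⟩ := Set.exists_subset_encard_eq hle
      have hVfin : V.Finite := V.finite_of_encard_eq_coe hVcard
      have hFcard : hVfin.toFinset.card = n := by
        have := hVfin.encard_eq_coe_toFinset_card
        rw [hVcard] at this
        exact_mod_cast this.symm
      set S := hVfin.toFinset.image (fun u => (⟨v, q, false, u⟩ : STriple)) with hS
      have hScard : S.card = n := by
        rw [hS, Finset.card_image_of_injective _ (fun a b h => by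
          simpa using congrArg STriple.tgt h), hFcard]
      refine ⟨↑S, (teSem_teIter (He_fwd G v q φ) n ↑S).2 ⟨S, hScard, rfl, ?_⟩, ?_⟩
      · intro t ht
        obtain ⟨u, hu, rfl⟩ := Finset.mem_image.1 ht
        obtain ⟨htr, hsat⟩ := hVsub (hVfin.mem_toFinset.1 hu)
        exact ⟨tripleRel_wt_fwd htr, rfl, rfl, rfl, hsat⟩
      · rintro t ht
        obtain ⟨u, hu, rfl⟩ := Finset.mem_image.1 (Finset.mem_coe.1 ht)
        obtain ⟨htr, -⟩ := hVsub (hVfin.mem_toFinset.1 hu)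
        exact Or.inl ⟨rfl, rfl, htr⟩
  | true =>
    simp only [if_pos rfl]
    set U := {u : NV | tripleRel G q u v ∧ shexSat semVT G u φ} with hU
    rw [shexSat_neighOpen_iff]
    constructor
    · rintro ⟨T, hT, hsub⟩
      obtain ⟨S, hcard, rfl, hPS⟩ := (teSem_teIter (He_bwd G v q φ) n T).1 hT
      have him : ↑(S.image STriple.tgt) ⊆ U := by
        rintro x hx
        obtain ⟨t, ht, rfl⟩ := Finset.mem_image.1 (Finset.mem_coe.1 hx)
        obtain ⟨-, -, hsym, hinv, hsat⟩ := hPS t ht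
        have hmem := hsub (Finset.mem_coe.2 ht)
        rcases hmem with ⟨hinv', -, -⟩ | ⟨-, -, htr⟩
        · rw [hinv] at hinv'
          exact absurd hinv'.symm Bool.false_ne_true
        · rw [hsym] at htr
          exact ⟨htr, hsat⟩
      have hinj : (S.image STriple.tgt).card = n := by
        rw [← hcard]
        apply Finset.card_image_of_injOn
        intro t₁ h₁ t₂ h₂ heq
        obtain ⟨-, s1, y1, i1, -⟩ := hPS t₁ h₁
        obtain ⟨-, s2, y2, i2, -⟩ := hPS t₂ h₂
        cases t₁; cases t₂; simp_all
      calc (n : ℕ∞) = ((S.image STriple.tgt).card : ℕ∞) := by rw [hinj]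
        _ = (↑(S.image STriple.tgt) : Set NV).encard :=
            (Set.encard_coe_eq_coe_finsetCard _).symm
        _ ≤ U.encard := Set.encard_mono him
    · intro hle
      obtain ⟨V, hVsub, hVcard⟩ := Set.exists_subset_encard_eq hle
      have hVfin : V.Finite := V.finite_of_encard_eq_coe hVcard
      have hFcard : hVfin.toFinset.card = n := by
        have := hVfin.encard_eq_coe_toFinset_card
        rw [hVcard] at this
        exact_mod_cast this.symm
      set S := hVfin.toFinset.image (fun u => (⟨v, q, true, u⟩ : STriple)) with hS
      have hScard : S.card = n := by
        rw [hS, Finset.card_image_of_injective _ (fun a b h => by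
          simpa using congrArg STriple.tgt h), hFcard]
      refine ⟨↑S, (teSem_teIter (He_bwd G v q φ) n ↑S).2 ⟨S, hScard, rfl, ?_⟩, ?_⟩
      · intro t ht
        obtain ⟨u, hu, rfl⟩ := Finset.mem_image.1 ht
        obtain ⟨htr, hsat⟩ := hVsub (hVfin.mem_toFinset.1 hu)
        exact ⟨tripleRel_wt_bwd htr, rfl, rfl, rfl, hsat⟩
      · rintro t ht
        obtain ⟨u, hu, rfl⟩ := Finset.mem_image.1 (Finset.mem_coe.1 ht)
        obtain ⟨htr, -⟩ := hVsub (hVfin.mem_toFinset.1 hu)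
        exact Or.inr ⟨rfl, rfl, htr⟩

end ShExGeq
section ShExClosed

open Classical

variable {VT : Type} {semVT : VT → Set GValue}

/-- A triple expression with empty semantics. -/
def botTE : TExpr VT := .fwd (Sum.inl 0) (.not shexTop)

lemma teSem_botTE (G : CommonGraph) (v : NV) (T : Set STriple) :
    T ∉ teSem semVT G v (botTE (VT := VT)) := by
  rintro ⟨t, -, -, -, -, hs, -⟩
  exact hs (shexTop_sat G t.tgt)

/-- Union of single unmarked steps over a list of symbols. -/
def allowAlts (l : List PK) : TExpr VT :=
  l.foldr (fun q e => .alt (.fwd q shexTop) e) botTE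

lemma teSem_allowAlts (G : CommonGraph) (v : NV) (l : List PK) :
    teSem semVT G v (allowAlts (VT := VT) l) =
      singFam (fun t => t.wellTyped ∧ t.src = v ∧ t.inv = false ∧ t.sym ∈ l) := by
  induction l with
  | nil =>
    ext T
    simp only [allowAlts, List.foldr_nil]
    constructor
    · intro h; exact absurd h (teSem_botTE G v T)
    · rintro ⟨t, ⟨-, -, -, h⟩, -⟩; simp at h
  | cons q l ih =>
    ext T
    show T ∈ teSem semVT G v (.alt (.fwd q shexTop) (allowAlts l)) ↔ _
    show T ∈ teSem semVT G v (.fwd q shexTop) ∪ teSem semVT G v (allowAlts l) ↔ _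
    rw [Set.mem_union, ih]
    constructor
    · rintro (⟨t, h1, h2, h3, h4, -, rfl⟩ | ⟨t, ⟨h1, h2, h3, h4⟩, rfl⟩)
      · exact ⟨t, ⟨h1, h2, h4, by rw [h3]; exact List.mem_cons_self⟩, rfl⟩
      · exact ⟨t, ⟨h1, h2, h3, List.mem_cons_of_mem q h4⟩, rfl⟩
    · rintro ⟨t, ⟨h1, h2, h3, h4⟩, rfl⟩
      rcases List.mem_cons.1 h4 with h | h
      · exact Or.inl ⟨t, h1, h2, h, h3, shexTop_sat G t.tgt, rfl⟩
      · exact Or.inr ⟨t, ⟨h1, h2, h3, h⟩, rfl⟩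

lemma shexSat_closedM (G : CommonGraph) (v : NV) (P : Finset GPred) (K : Finset GKey) :
    shexSat semVT G v (ShExShape.neighHalf
      (.star (allowAlts (VT := VT) (P.toList.map Sum.inl ++ K.toList.map Sum.inr))) ∅) ↔
      ((∀ p ∉ P, ∀ u, ¬ tripleRel G (Sum.inl p) v u) ∧
       (∀ k ∉ K, ∀ u, ¬ tripleRel G (Sum.inr k) v u)) := by
  set l := P.toList.map Sum.inl ++ K.toList.map Sum.inr with hl
  have hmeml : ∀ q : PK, q ∈ l ↔ (∃ p ∈ P, q = Sum.inl p) ∨ (∃ k ∈ K, q = Sum.inr k) := by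
    intro q
    simp [hl, List.mem_append, List.mem_map, Finset.mem_toList, eq_comm]
  show neighPM G v ∈ seqSem (teSem semVT G v (.star (allowAlts l)))
      (starSem (negSem v ∅ true)) ↔ _
  have hstar : teSem semVT G v (TExpr.star (allowAlts (VT := VT) l))
      = starSem (teSem semVT G v (allowAlts l)) := rfl
  constructor
  · rintro ⟨T₁, hT₁, T₂, hT₂, hd, heq⟩
    rw [hstar, teSem_allowAlts, mem_starSem_singFam] at hT₁
    rw [negSem_eq_singFam, mem_starSem_singFam] at hT₂
    have key : ∀ (q : PK) (u : NV), tripleRel G q v u → q ∈ l := by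
      intro q u htr
      have hmem : (⟨v, q, false, u⟩ : STriple) ∈ neighPM G v := Or.inl ⟨rfl, rfl, htr⟩
      rw [heq] at hmem
      rcases hmem with h | h
      · exact (hT₁.2 _ h).2.2.2
      · obtain ⟨-, -, hinv, -⟩ := hT₂.2 _ h
        simp at hinv
    constructor
    · intro p hp u htr
      rcases (hmeml (Sum.inl p)).1 (key _ u htr) with ⟨p', hp', he⟩ | ⟨k', -, he⟩
      · injection he with he'; exact hp (he' ▸ hp')
      · exact absurd he (by simp)
    · intro k hk u htr
      rcases (hmeml (Sum.inr k)).1 (key _ u htr) with ⟨p', -, he⟩ | ⟨k', hk', he⟩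
      · exact absurd he (by simp)
      · injection he with he'; exact hk (he' ▸ hk')
  · rintro ⟨hP, hK⟩
    have hfin := neighPM_finite G v
    refine ⟨neighPM G v ∩ {t | t.inv = false}, ?_, neighPM G v ∩ {t | t.inv = true}, ?_, ?_, ?_⟩
    · rw [hstar, teSem_allowAlts, mem_starSem_singFam]
      refine ⟨hfin.subset Set.inter_subset_left, ?_⟩
      rintro t ⟨hmem, hinv⟩
      refine ⟨neighPM_wt hmem, neighPM_src hmem, hinv, ?_⟩
      rcases hmem with ⟨-, -, htr⟩ | ⟨hinv', -, -⟩
      · rcases hq : t.sym with p | k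
        · rw [hq] at htr
          by_cases hp : p ∈ P
          · exact (hmeml _).2 (Or.inl ⟨p, hp, rfl⟩)
          · exact absurd htr (hP p hp t.tgt)
        · rw [hq] at htr
          by_cases hk : k ∈ K
          · exact (hmeml _).2 (Or.inr ⟨k, hk, rfl⟩)
          · exact absurd htr (hK k hk t.tgt)
      · have hb : t.inv = false := hinv
        rw [hb] at hinv'
        exact absurd hinv' Bool.false_ne_true
    · rw [negSem_eq_singFam, mem_starSem_singFam]
      refine ⟨hfin.subset Set.inter_subset_left, ?_⟩
      rintro t ⟨hmem, hinv⟩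
      exact ⟨neighPM_wt hmem, neighPM_src hmem, hinv, Finset.notMem_empty _⟩
    · ext x
      simp only [Set.mem_inter_iff, Set.mem_setOf_eq, Set.mem_empty_iff_false, iff_false]
      rintro ⟨⟨-, h1⟩, -, h2⟩
      rw [h1] at h2
      exact Bool.false_ne_true h2
    · ext x
      simp only [Set.mem_union, Set.mem_inter_iff, Set.mem_setOf_eq]
      constructor
      · intro hx
        cases hinv : x.inv
        · exact Or.inl ⟨hx, rfl⟩
        · exact Or.inr ⟨hx, rfl⟩
      · rintro (⟨h, -⟩ | ⟨h, -⟩) <;> exact h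

end ShExClosed
section ShExInst

open Classical

variable (VT : Type) (semVT : VT → Set GValue)

/-- ShEx as an instance of the abstract logic. -/
noncomputable def shexLogic : GLogic VT semVT where
  A := ShExShape VT
  sat G v a := shexSat semVT G v a
  top := shexTop
  sat_top := fun G v => shexTop_sat G v
  andl := .and
  sat_and := fun G v a b => Iff.rfl
  orl := .or
  sat_or := fun G v a b => Iff.rfl
  notl := .not
  sat_not := fun G v a => Iff.rfl
  testC := .testC
  sat_testC := fun G v c => Iff.rfl
  testT := .testT
  sat_testT := fun G v τ => Iff.rfl
  geq := fun n q dir a => .neighOpen (teIter (if dir then .bwd q a else .fwd q a) n) ∅ ∅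
  sat_geq := fun G v n q dir a => shexSat_geq G v n q dir a
  closedM := fun P K =>
    .neighHalf (.star (allowAlts (P.toList.map Sum.inl ++ K.toList.map Sum.inr))) ∅
  sat_closedM := fun G v P K => shexSat_closedM G v P K

/-- The ShEx selector corresponding to a selector kind. -/
def shexSel : SelKind → ShExShape VT
  | .out q => .neighOpen (.fwd q shexTop) ∅ ∅
  | .inn q => .neighOpen (.bwd q shexTop) ∅ ∅
  | .cst c => .testC c

lemma shexSel_isSel (sk : SelKind) : IsShExSelector (shexSel VT sk) := by
  cases sk with
  | out q => exact Or.inr (Or.inr (Or.inl ⟨q, rfl⟩))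
  | inn q => exact Or.inr (Or.inr (Or.inr ⟨q, rfl⟩))
  | cst c => exact Or.inl ⟨c, rfl⟩

lemma shexSel_sat (G : CommonGraph) (v : NV) (sk : SelKind) :
    shexSat semVT G v (shexSel VT sk) ↔ wsat G v sk := by
  cases sk with
  | out q =>
    show shexSat semVT G v (.neighOpen (.fwd q shexTop) ∅ ∅) ↔ _
    rw [shexSat_neighOpen_iff]
    constructor
    · rintro ⟨T, hT, hsub⟩
      obtain ⟨t, ⟨-, -, hsym, hinv, -⟩, rfl⟩ := (He_fwd G v q shexTop T).1 hT
      have hmem : t ∈ neighPM G v := hsub rfl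
      rcases hmem with ⟨-, -, htr⟩ | ⟨hinv', -, -⟩
      · rw [hsym] at htr
        exact ⟨t.tgt, htr⟩
      · rw [hinv] at hinv'
        exact absurd hinv' Bool.false_ne_true
    · rintro ⟨u, htr⟩
      refine ⟨{⟨v, q, false, u⟩}, ⟨⟨v, q, false, u⟩, tripleRel_wt_fwd htr, rfl, rfl, rfl,
        shexTop_sat G u, rfl⟩, ?_⟩
      rw [Set.singleton_subset_iff]
      exact Or.inl ⟨rfl, rfl, htr⟩
  | inn q =>
    show shexSat semVT G v (.neighOpen (.bwd q shexTop) ∅ ∅) ↔ _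
    rw [shexSat_neighOpen_iff]
    constructor
    · rintro ⟨T, hT, hsub⟩
      obtain ⟨t, ⟨-, -, hsym, hinv, -⟩, rfl⟩ := (He_bwd G v q shexTop T).1 hT
      have hmem : t ∈ neighPM G v := hsub rfl
      rcases hmem with ⟨hinv', -, -⟩ | ⟨-, -, htr⟩
      · rw [hinv] at hinv'
        exact absurd hinv'.symm Bool.false_ne_true
      · rw [hsym] at htr
        exact ⟨t.tgt, htr⟩
    · rintro ⟨u, htr⟩
      refine ⟨{⟨v, q, true, u⟩}, ⟨⟨v, q, true, u⟩, tripleRel_wt_bwd htr, rfl, rfl, rfl,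
        shexTop_sat G u, rfl⟩, ?_⟩
      rw [Set.singleton_subset_iff]
      exact Or.inr ⟨rfl, rfl, htr⟩
  | cst c => exact Iff.rfl

/-- ShEx half of the main theorem. -/
lemma shex_half (S : CommonSchema VT) :
    ∃ S₂ : ShExSchema VT, ∀ G : CommonGraph,
      commonValid semVT S G ↔ shexValid semVT S₂ G := by
  classical
  have key : ∀ pr : CShape VT × CShape VT, pr ∈ S.pairs →
      ∃ (sk : SelKind) (body : ShExShape VT), ∀ G,
        ((∀ v, wsat G v sk → shexSat semVT G v body) ↔
         (∀ v, cshapeSat semVT G v pr.1 → cshapeSat semVT G v pr.2)) :=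
    fun pr h => pair_translate (shexLogic VT semVT) pr.1 pr.2 (S.sel pr h)
  choose sk body hkey using key
  refine ⟨⟨S.pairs.attach.image (fun pr => (shexSel VT (sk pr.1 pr.2), body pr.1 pr.2)), ?_⟩,
    fun G => ?_⟩
  · intro pr' hpr'
    obtain ⟨a, -, rfl⟩ := Finset.mem_image.1 hpr'
    exact shexSel_isSel VT _
  · constructor
    · intro h v pr' hpr' hsat
      obtain ⟨a, -, rfl⟩ := Finset.mem_image.1 hpr'
      refine (hkey a.1 a.2 G).2 (fun v' hs => h v' a.1 a.2 hs) v ?_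
      exact (shexSel_sat VT semVT G v _).1 hsat
    · intro h v pr hpr hsat
      refine (hkey pr hpr G).1 (fun v' hw => ?_) v hsat
      exact h v' _ (Finset.mem_image.2 ⟨⟨pr, hpr⟩, Finset.mem_attach _ _, rfl⟩)
        ((shexSel_sat VT semVT G v' _).2 hw)

end ShExInst
/-- For every common schema `S` there exist a SHACL schema `S₁` and a
ShEx schema `S₂`, each equivalent to `S`: for every common graph `G`,
`G ⊨ S` iff `G ⊨ S₁`, and `G ⊨ S` iff `G ⊨ S₂`. -/
theorem common_schema_has_equivalent_shacl_and_shex_schemas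
    (VT : Type) (semVT : VT → Set GValue) (S : CommonSchema VT) :
    ∃ (S₁ : SHACLSchema VT) (S₂ : ShExSchema VT),
      (∀ G : CommonGraph, commonValid semVT S G ↔ shaclValid semVT S₁ G) ∧
      (∀ G : CommonGraph, commonValid semVT S G ↔ shexValid semVT S₂ G) := by
  obtain ⟨S₁, h₁⟩ := shacl_half VT semVT S
  obtain ⟨S₂, h₂⟩ := shex_half VT semVT S
  exact ⟨S₁, S₂, h₁, h₂⟩
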